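/- arXiv:2602.06010 — 7 statements merged into one kernel-verified Lean document; each statement's English description precedes it below -/
import Mathlib

section
/- Let (X,d,μ) be a geodesic metric measure space (μ a positive inner regular Radon measure with full support) such that D_R < ∞ for some R > 0. Then for every x ∈ X, the ball B(x,R) with the induced distance and measure is a doubling metric measure space with doubling constant at most D_R^3; more precisely, for every x ∈ X, r ∈ (0,R], y ∈ B(x,r), and r' ∈ (0,2r], one has μ(B(y,2r') ∩ B(x,r)) ≤ D_R^3 μ(B(y,r') ∩ B(x,r)). -/
/-!
Fix `a = min (r/4) (r'/2)` and let `z` be the point at distance `min a d(y,x)` from `y` on a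
geodesic from `y` to `x`. Then `B(z,a) ⊆ B(y,r') ∩ B(x,r)`, while `B(y,2r') ∩ B(x,r) ⊆ B(z,8a)`,
and `8a = 2³a` with `4a ≤ R`, so three applications of the doubling inequality at `z` give `D³`.
-/

open MeasureTheory Metric Set ENNReal NNReal

section

variable {X : Type*} [MetricSpace X]

theorem exists_dist_eq_of_geodesic {x y : X} {γ : ℝ → X} (hγ0 : γ 0 = y) (hγ1 : γ 1 = x)
    (hγ : ∀ s t : ℝ, dist (γ s) (γ t) = |s - t| * dist y x) {s : ℝ} (hs0 : 0 ≤ s)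
    (hs : s ≤ dist y x) : ∃ z, dist y z = s ∧ dist z x = dist y x - s := by
  set t := s / dist y x
  have hcancel : t * dist y x = s := div_mul_cancel_of_imp fun h => le_antisymm (h ▸ hs) hs0
  have ht0 : 0 ≤ t := div_nonneg hs0 dist_nonneg
  have ht1 : t ≤ 1 := div_le_one_of_le₀ hs dist_nonneg
  refine ⟨γ t, ?_, ?_⟩
  · rw [← hγ0, hγ, zero_sub, abs_neg, abs_of_nonneg ht0, hcancel]
  · rw [← hγ1, hγ, abs_of_nonpos (by linarith), neg_sub, sub_mul, one_mul, hcancel, hγ1]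

theorem exists_ball_subset_inter_and_inter_subset_ball
    (hgeo : ∀ x y : X, ∃ γ : ℝ → X, γ 0 = x ∧ γ 1 = y ∧
      ∀ s t : ℝ, dist (γ s) (γ t) = |s - t| * dist x y)
    {x y : X} {r r' : ℝ} (hy : y ∈ ball x r) (hr' : 0 < r') :
    ∃ z, ball z (min (r / 4) (r' / 2)) ⊆ ball y r' ∩ ball x r ∧
      ball y (2 * r') ∩ ball x r ⊆ ball z (8 * min (r / 4) (r' / 2)) := by
  set a := min (r / 4) (r' / 2)
  rw [mem_ball] at hy
  have hr : 0 < r := dist_nonneg.trans_lt hy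
  have ha : 0 < a := lt_min (by linarith) (by linarith)
  obtain ⟨γ, hγ0, hγ1, hγ⟩ := hgeo y x
  obtain ⟨z, hyz, hzx⟩ := exists_dist_eq_of_geodesic hγ0 hγ1 hγ (le_min ha.le dist_nonneg)
    (min_le_right a (dist y x))
  have hyz_le : dist y z ≤ a := hyz ▸ min_le_left _ _
  -- `d(z,x) + a = max a d(y,x) < r`
  have hzx_lt : dist z x + a < r := by
    rw [hzx]
    rcases min_cases a (dist y x) with ⟨h, _⟩ | ⟨h, _⟩ <;> rw [h] <;>
      linarith [min_le_left (r / 4) (r' / 2)]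
  refine ⟨z, fun w hw => ⟨?_, ?_⟩, fun w ⟨hwy, hwx⟩ => ?_⟩
  · rw [mem_ball] at hw ⊢
    linarith [dist_triangle w z y, dist_comm z y, min_le_right (r / 4) (r' / 2)]
  · rw [mem_ball] at hw ⊢
    linarith [dist_triangle w z x]
  · rw [mem_ball] at hwy hwx ⊢
    rcases min_cases (r / 4) (r' / 2) with ⟨h, _⟩ | ⟨h, _⟩
    · linarith [dist_triangle w x z, dist_comm x z]
    · linarith [dist_triangle w y z]

theorem measure_ball_two_pow_mul_le [MeasurableSpace X] {μ : Measure X} {R : ℝ} {D : ℝ≥0}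
    (hD : ∀ (x : X), ∀ r ∈ Set.Ioc (0 : ℝ) R, μ (ball x (2 * r)) ≤ (D : ℝ≥0∞) * μ (ball x r))
    (z : X) {s : ℝ} (hs : 0 < s) :
    ∀ n : ℕ, 2 ^ n * s ≤ 2 * R → μ (ball z (2 ^ n * s)) ≤ (D : ℝ≥0∞) ^ n * μ (ball z s)
  | 0, _ => by simp
  | n + 1, hn => by
    have hpos : 0 < 2 ^ n * s := by positivity
    have hle : 2 ^ n * s ≤ R := by rw [pow_succ] at hn; linarith
    calc μ (ball z (2 ^ (n + 1) * s)) = μ (ball z (2 * (2 ^ n * s))) := by ring_nf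
      _ ≤ D * μ (ball z (2 ^ n * s)) := hD z _ ⟨hpos, hle⟩
      _ ≤ D * (D ^ n * μ (ball z s)) :=
        mul_le_mul_right (measure_ball_two_pow_mul_le hD z hs n (by linarith)) _
      _ = (D : ℝ≥0∞) ^ (n + 1) * μ (ball z s) := by ring

end

theorem stmt_1_general {X : Type*} [MetricSpace X] [MeasurableSpace X]
    (μ : Measure X)
    (hgeo : ∀ x y : X, ∃ γ : ℝ → X, γ 0 = x ∧ γ 1 = y ∧
      ∀ s t : ℝ, dist (γ s) (γ t) = |s - t| * dist x y)
    (R : ℝ) (D : ℝ≥0)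
    (hD : ∀ (x : X), ∀ r ∈ Set.Ioc (0 : ℝ) R, μ (ball x (2 * r)) ≤ (D : ℝ≥0∞) * μ (ball x r)) :
    ∀ (x : X), ∀ r ∈ Set.Ioc (0 : ℝ) R, ∀ y ∈ ball x r, ∀ r' ∈ Set.Ioc (0 : ℝ) (2 * r),
      μ (ball y (2 * r') ∩ ball x r) ≤ (D : ℝ≥0∞) ^ 3 * μ (ball y r' ∩ ball x r) := by
  intro x r ⟨hr0, hrR⟩ y hy r' ⟨hr'0, _⟩
  obtain ⟨z, hinner, houter⟩ := exists_ball_subset_inter_and_inter_subset_ball hgeo hy hr'0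
  have ha : 0 < min (r / 4) (r' / 2) := lt_min (by linarith) (by linarith)
  have h8a : 2 ^ 3 * min (r / 4) (r' / 2) ≤ 2 * R := by
    linarith [min_le_left (r / 4) (r' / 2)]
  calc μ (ball y (2 * r') ∩ ball x r) ≤ μ (ball z (2 ^ 3 * min (r / 4) (r' / 2))) := by
        rw [show (2 : ℝ) ^ 3 = 8 by norm_num]; exact measure_mono houter
    _ ≤ (D : ℝ≥0∞) ^ 3 * μ (ball z (min (r / 4) (r' / 2))) :=
        measure_ball_two_pow_mul_le hD z ha 3 h8a
    _ ≤ (D : ℝ≥0∞) ^ 3 * μ (ball y r' ∩ ball x r) := mul_le_mul_right (measure_mono hinner) _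

/-- on a geodesic space with locally doubling measure (doubling constant
`D` for radii `≤ R`), every ball `B(x,R)` with the induced measure is doubling with
constant at most `D^3`. -/
theorem stmt_1 {X : Type*} [MetricSpace X] [MeasurableSpace X] [BorelSpace X]
    [LocallyCompactSpace X] (μ : Measure X) [μ.InnerRegular] [IsFiniteMeasureOnCompacts μ]
    (hsupp : ∀ (x : X) (r : ℝ), 0 < r → 0 < μ (ball x r))
    (hgeo : ∀ x y : X, ∃ γ : ℝ → X, γ 0 = x ∧ γ 1 = y ∧
      ∀ s t : ℝ, dist (γ s) (γ t) = |s - t| * dist x y)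
    (R : ℝ) (hR : 0 < R) (D : ℝ≥0) (hD1 : 1 ≤ D)
    (hD : ∀ (x : X), ∀ r ∈ Set.Ioc (0 : ℝ) R, μ (ball x (2 * r)) ≤ (D : ℝ≥0∞) * μ (ball x r)) :
    ∀ (x : X), ∀ r ∈ Set.Ioc (0 : ℝ) R, ∀ y ∈ ball x r, ∀ r' ∈ Set.Ioc (0 : ℝ) (2 * r),
      μ (ball y (2 * r') ∩ ball x r) ≤ (D : ℝ≥0∞) ^ 3 * μ (ball y r' ∩ ball x r) :=
  stmt_1_general μ hgeo R D hD
end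

section
/- (Local Whitney-type lemma) Let (X,d,μ) be a connected locally compact metric space with a positive inner regular Radon measure of full support, and let R > 0 with D_R < ∞. Let U be a proper open subset of X with diam(U) < R. Then there are a countable subset N of U and a function r : N → (0, R/2] such that: (a) χ_U ≤ Σ_{x∈N} χ_{B(x,r(x))} ≤ D_R^5 χ_U pointwise; (b) the balls B(x, r(x)/3), x ∈ N, are pairwise disjoint; (c) for every x ∈ N and every κ > 2, B(x, κ r(x)) \ U is non-empty. -/
open MeasureTheory Metric Set ENNReal NNReal

/-- Any ball of radius at most `2 * R` has finite measure, by doubling. -/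
lemma aux_fin {X : Type*} [MetricSpace X] [MeasurableSpace X] [LocallyCompactSpace X]
    (μ : Measure X) [IsFiniteMeasureOnCompacts μ] {R : ℝ} (hR : 0 < R) {D : ℝ≥0}
    (hD : ∀ (x : X), ∀ r ∈ Set.Ioc (0 : ℝ) R, μ (ball x (2 * r)) ≤ (D : ℝ≥0∞) * μ (ball x r))
    (z : X) (ρ : ℝ) (hρ : ρ ≤ 2 * R) : μ (ball z ρ) ≠ ∞ := by
  obtain ⟨K, hK, hKn⟩ := exists_compact_mem_nhds z
  obtain ⟨ε, hε, hεK⟩ := Metric.mem_nhds_iff.1 hKn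
  have hbase : μ (ball z ε) ≠ ∞ :=
    ((measure_mono hεK).trans_lt hK.measure_lt_top).ne
  have main : ∀ n : ℕ, ∀ ρ : ℝ, ρ ≤ 2 * R → ρ ≤ ε * 2 ^ n → μ (ball z ρ) ≠ ∞ := by
    intro n
    induction n with
    | zero =>
      intro ρ _ h
      simp only [pow_zero, mul_one] at h
      exact ((measure_mono (ball_subset_ball h)).trans_lt hbase.lt_top).ne
    | succ n ih =>
      intro ρ h1 h2
      by_cases hρ' : ρ ≤ ε * 2 ^ n
      · exact ih ρ h1 hρ'
      push_neg at hρ'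
      have hρpos : 0 < ρ := lt_trans (by positivity) hρ'
      have hhalf : μ (ball z ρ) ≤ (D : ℝ≥0∞) * μ (ball z (ρ / 2)) := by
        have := hD z (ρ / 2) ⟨by positivity, by linarith⟩
        rwa [show 2 * (ρ / 2) = ρ by ring] at this
      have hrec : μ (ball z (ρ / 2)) ≠ ∞ := by
        refine ih (ρ / 2) (by linarith) ?_
        have : ρ ≤ ε * 2 ^ (n + 1) := h2
        rw [pow_succ] at this
        linarith
      exact ne_top_of_le_ne_top (ENNReal.mul_ne_top ENNReal.coe_ne_top hrec) hhalf
  obtain ⟨n, hn⟩ : ∃ n : ℕ, ρ / ε < 2 ^ n := pow_unbounded_of_one_lt (ρ / ε) one_lt_two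
  refine main n ρ hρ ?_
  have := (div_lt_iff₀ hε).1 hn
  linarith [this]

/-- Five doublings. -/
lemma aux_chain {X : Type*} [MetricSpace X] [MeasurableSpace X]
    (μ : Measure X) {R : ℝ} {D : ℝ≥0}
    (hD : ∀ (x : X), ∀ r ∈ Set.Ioc (0 : ℝ) R, μ (ball x (2 * r)) ≤ (D : ℝ≥0∞) * μ (ball x r))
    (x : X) (s : ℝ) (hs : 0 < s) (hs2 : s ≤ 2 * R) :
    μ (ball x s) ≤ (D : ℝ≥0∞) ^ 5 * μ (ball x (s / 32)) := by
  have step : ∀ t : ℝ, 0 < t → t ≤ 2 * R → μ (ball x t) ≤ (D : ℝ≥0∞) * μ (ball x (t / 2)) := by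
    intro t ht ht2
    have := hD x (t / 2) ⟨by positivity, by linarith⟩
    rwa [show 2 * (t / 2) = t by ring] at this
  have h1 := step s hs hs2
  have h2 := step (s / 2) (by positivity) (by linarith)
  have h3 := step (s / 2 / 2) (by positivity) (by linarith)
  have h4 := step (s / 2 / 2 / 2) (by positivity) (by linarith)
  have h5 := step (s / 2 / 2 / 2 / 2) (by positivity) (by linarith)
  have e : s / 2 / 2 / 2 / 2 / 2 = s / 32 := by ring
  rw [e] at h5
  calc μ (ball x s) ≤ (D : ℝ≥0∞) * μ (ball x (s / 2)) := h1
    _ ≤ (D : ℝ≥0∞) * ((D : ℝ≥0∞) * μ (ball x (s / 2 / 2))) := by gcongr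
    _ ≤ (D : ℝ≥0∞) * ((D : ℝ≥0∞) * ((D : ℝ≥0∞) * μ (ball x (s / 2 / 2 / 2)))) := by gcongr
    _ ≤ (D : ℝ≥0∞) * ((D : ℝ≥0∞) * ((D : ℝ≥0∞) *
        ((D : ℝ≥0∞) * μ (ball x (s / 2 / 2 / 2 / 2))))) := by gcongr
    _ ≤ (D : ℝ≥0∞) * ((D : ℝ≥0∞) * ((D : ℝ≥0∞) * ((D : ℝ≥0∞) *
        ((D : ℝ≥0∞) * μ (ball x (s / 32)))))) := by gcongr
    _ = (D : ℝ≥0∞) ^ 5 * μ (ball x (s / 32)) := by ring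

/-- local Whitney-type lemma on a connected locally doubling space. -/
theorem stmt_3 {X : Type*} [MetricSpace X] [MeasurableSpace X] [BorelSpace X]
    [LocallyCompactSpace X] [ConnectedSpace X]
    (μ : Measure X) [μ.InnerRegular] [IsFiniteMeasureOnCompacts μ]
    (hsupp : ∀ (x : X) (r : ℝ), 0 < r → 0 < μ (ball x r))
    (R : ℝ) (hR : 0 < R) (D : ℝ≥0) (hD1 : 1 ≤ D)
    (hD : ∀ (x : X), ∀ r ∈ Set.Ioc (0 : ℝ) R, μ (ball x (2 * r)) ≤ (D : ℝ≥0∞) * μ (ball x r))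
    (U : Set X) (hUo : IsOpen U) (hUp : U ≠ Set.univ)
    (hUd : EMetric.diam U < ENNReal.ofReal R) :
    ∃ N ⊆ U, N.Countable ∧ ∃ r : X → ℝ,
      (∀ x ∈ N, r x ∈ Set.Ioc (0 : ℝ) (R / 2)) ∧
      (∀ z : X, U.indicator (1 : X → ℝ≥0∞) z ≤
        ∑' x : N, (ball (x : X) (r x)).indicator (1 : X → ℝ≥0∞) z) ∧
      (∀ z : X, ∑' x : N, (ball (x : X) (r x)).indicator (1 : X → ℝ≥0∞) z ≤
        (D : ℝ≥0∞) ^ 5 * U.indicator (1 : X → ℝ≥0∞) z) ∧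
      N.PairwiseDisjoint (fun x => ball x (r x / 3)) ∧
      (∀ x ∈ N, ∀ κ : ℝ, 2 < κ → (ball x (κ * r x) \ U).Nonempty) := by
  rcases U.eq_empty_or_nonempty with hUe | ⟨z₀, hz₀⟩
  · refine ⟨∅, by simp, countable_empty, fun _ => R / 2, by simp, ?_, ?_, by simp, by simp⟩
    · intro z; simp [hUe]
    · intro z; simp
  -- basic objects
  have hUc : Uᶜ.Nonempty := nonempty_compl.2 hUp
  set rr : X → ℝ := fun x => infDist x Uᶜ / 2 with hrr
  -- positivity of rr on U
  have hδpos : ∀ x ∈ U, 0 < infDist x Uᶜ := by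
    intro x hx
    exact (hUo.isClosed_compl.notMem_iff_infDist_pos hUc).1 (by simpa using hx)
  have hrpos : ∀ x ∈ U, 0 < rr x := fun x hx => by
    have := hδpos x hx; simp only [hrr]; linarith
  -- infDist bound via the frontier
  have hδltR : ∀ x ∈ U, infDist x Uᶜ < R := by
    intro x hx
    have hfr : (frontier U).Nonempty := by
      rcases eq_empty_or_nonempty (frontier U) with h | h
      · rcases isClopen_iff.1 (isClopen_iff_frontier_eq_empty.2 h) with h' | h'
        · exact absurd (h' ▸ hz₀) (notMem_empty z₀)
        · exact absurd h' hUp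
      · exact h
    obtain ⟨y, hy⟩ := hfr
    have hyC : y ∈ Uᶜ := by
      have := hUo.frontier_eq ▸ hy
      exact this.2
    have hyc : y ∈ closure U := (hUo.frontier_eq ▸ hy).1
    have hedist : edist x y < ENNReal.ofReal R := by
      calc edist x y ≤ EMetric.diam (closure U) :=
            EMetric.edist_le_diam_of_mem (subset_closure hx) hyc
        _ = EMetric.diam U := EMetric.diam_closure U
        _ < ENNReal.ofReal R := hUd
    have hdist : dist x y < R := by
      rwa [edist_lt_ofReal] at hedist
    exact lt_of_le_of_lt (infDist_le_dist_of_mem hyC) hdist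
  have hrle : ∀ x ∈ U, rr x ≤ R / 2 := fun x hx => by
    have := hδltR x hx; simp only [hrr]; linarith
  -- balls are inside U
  have hball_sub : ∀ x ∈ U, ball x (rr x) ⊆ U := by
    intro x hx y hy
    by_contra hyU
    have h1 : infDist x Uᶜ ≤ dist x y := infDist_le_dist_of_mem hyU
    have h2 : dist y x < rr x := hy
    have := hδpos x hx
    rw [dist_comm] at h2
    simp only [hrr] at h2
    linarith
  -- Lipschitz-type comparison for points z ∈ ball x (rr x)
  have hcomp : ∀ x ∈ U, ∀ z, z ∈ ball x (rr x) → rr x < 2 * rr z ∧ rr z ≤ 3 / 2 * rr x := by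
    intro x hx z hz
    have hd : dist z x < rr x := hz
    constructor
    · have h1 : infDist x Uᶜ ≤ infDist z Uᶜ + dist x z := infDist_le_infDist_add_dist
      rw [dist_comm] at h1
      simp only [hrr] at *
      linarith
    · have h1 : infDist z Uᶜ ≤ infDist x Uᶜ + dist z x := infDist_le_infDist_add_dist
      simp only [hrr] at *
      linarith
  -- the key measure estimate for overlapping balls
  have hkey : ∀ x ∈ U, ∀ z ∈ U, z ∈ ball x (rr x) →
      ball x (rr x / 3) ⊆ ball z (8 * rr z / 3) ∧
      μ (ball z (8 * rr z / 3)) ≤ (D : ℝ≥0∞) ^ 5 * μ (ball x (rr x / 3)) := by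
    intro x hx z hz hzb
    obtain ⟨hc1, hc2⟩ := hcomp x hx z hzb
    have hd : dist z x < rr x := hzb
    have hrx := hrpos x hx
    have hrz := hrpos z hz
    constructor
    · intro y hy
      have hy' : dist y x < rr x / 3 := hy
      have hd' : dist x z < rr x := by rw [dist_comm]; exact hd
      have h4 : dist y z < 4 * rr x / 3 := by
        calc dist y z ≤ dist y x + dist x z := dist_triangle _ _ _
          _ < rr x / 3 + rr x := by linarith
          _ = 4 * rr x / 3 := by ring
      show dist y z < 8 * rr z / 3
      linarith
    · set s : ℝ := rr x + 8 * rr z / 3 with hs_def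
      have hs : 0 < s := by positivity
      have hs2 : s ≤ 2 * R := by
        have h1 := hrle x hx
        have h2 := hrle z hz
        simp only [hs_def]; linarith
      have hsub : ball z (8 * rr z / 3) ⊆ ball x s := by
        intro y hy
        have hy' : dist y z < 8 * rr z / 3 := hy
        have : dist y x < s := by
          calc dist y x ≤ dist y z + dist z x := dist_triangle _ _ _
            _ < 8 * rr z / 3 + rr x := by linarith
            _ = s := by simp only [hs_def]; ring
        exact this
      have hsmall : s / 32 ≤ rr x / 3 := by
        have : s ≤ 5 * rr x := by simp only [hs_def]; linarith
        linarith
      calc μ (ball z (8 * rr z / 3)) ≤ μ (ball x s) := measure_mono hsub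
        _ ≤ (D : ℝ≥0∞) ^ 5 * μ (ball x (s / 32)) := aux_chain μ hD x s hs hs2
        _ ≤ (D : ℝ≥0∞) ^ 5 * μ (ball x (rr x / 3)) :=
            mul_le_mul_right (measure_mono (ball_subset_ball hsmall)) _
  -- Zorn's lemma: maximal disjoint family
  obtain ⟨N, hNmax⟩ := zorn_subset
      {A : Set X | A ⊆ U ∧ A.PairwiseDisjoint (fun x => ball x (rr x / 3))} (by
    intro c hc hchain
    refine ⟨⋃₀ c, ⟨?_, ?_⟩, fun s hs => subset_sUnion_of_mem hs⟩
    · exact sUnion_subset fun A hA => (hc hA).1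
    · intro x hx y hy hxy
      obtain ⟨A, hA, hxA⟩ := hx
      obtain ⟨B, hB, hyB⟩ := hy
      rcases hchain.total hA hB with h | h
      · exact (hc hB).2 (h hxA) hyB hxy
      · exact (hc hA).2 hxA (h hyB) hxy)
  obtain ⟨⟨hNU, hNdisj⟩, hNmax⟩ := hNmax
  -- covering property
  have hcov : ∀ z ∈ U, ∃ x ∈ N, z ∈ ball x (rr x) := by
    intro z hz
    by_cases hzN : z ∈ N
    · exact ⟨z, hzN, mem_ball_self (hrpos z hz)⟩
    have hnot : ¬ (insert z N).PairwiseDisjoint (fun x => ball x (rr x / 3)) := by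
      intro hdisj
      have : insert z N ∈ {A : Set X | A ⊆ U ∧
          A.PairwiseDisjoint (fun x => ball x (rr x / 3))} :=
        ⟨insert_subset hz hNU, hdisj⟩
      have := hNmax this (subset_insert z N)
      exact hzN (this (mem_insert z N))
    rw [Set.pairwiseDisjoint_insert] at hnot
    push_neg at hnot
    obtain ⟨x, hxN, hxz, hnd⟩ := hnot hNdisj
    rw [Set.not_disjoint_iff] at hnd
    obtain ⟨w, hw1, hw2⟩ := hnd
    -- derive z ∈ ball x (rr x)
    have hx : x ∈ U := hNU hxN
    have hd1 : dist w z < rr z / 3 := hw1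
    have hd2 : dist w x < rr x / 3 := hw2
    have hdzx : dist z x < rr z / 3 + rr x / 3 := by
      calc dist z x ≤ dist z w + dist w x := dist_triangle _ _ _
        _ < rr z / 3 + rr x / 3 := by rw [dist_comm z w]; linarith
    have hlip : rr z ≤ rr x + dist z x / 2 := by
      have h1 : infDist z Uᶜ ≤ infDist x Uᶜ + dist z x := infDist_le_infDist_add_dist
      simp only [hrr] at *
      linarith
    have hrx := hrpos x hx
    have : dist z x < rr x := by linarith
    exact ⟨x, hxN, this⟩
  -- countability
  have hNcount : N.Countable := by
    rw [← Set.countable_coe_iff]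
    have hcnt := MeasureTheory.Measure.countable_meas_pos_of_disjoint_of_meas_iUnion_ne_top
      (ι := N) μ (As := fun x => ball (x : X) (rr x / 3))
      (fun x => measurableSet_ball)
      (by
        intro i j hij
        exact hNdisj i.2 j.2 (fun h => hij (Subtype.ext h)))
      (by
        have hsub : (⋃ i : N, ball (i : X) (rr i / 3)) ⊆ ball z₀ R := by
          refine iUnion_subset fun i => ?_
          have hiU : (i : X) ∈ U := hNU i.2
          have h1 : ball (i : X) (rr i / 3) ⊆ U := fun y hy =>
            hball_sub i hiU (ball_subset_ball (by linarith [hrpos i hiU]) hy)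
          refine h1.trans fun y hy => ?_
          have : edist z₀ y < ENNReal.ofReal R := by
            calc edist z₀ y ≤ EMetric.diam U := EMetric.edist_le_diam_of_mem hz₀ hy
              _ < ENNReal.ofReal R := hUd
          rwa [mem_ball, dist_comm, ← edist_lt_ofReal]
        exact ne_top_of_le_ne_top (aux_fin μ hR hD z₀ R (by linarith)) (measure_mono hsub))
    have : {i : N | 0 < μ (ball (i : X) (rr i / 3))} = Set.univ := by
      ext i
      simp only [mem_setOf_eq, mem_univ, iff_true]
      exact hsupp _ _ (by linarith [hrpos i (hNU i.2)])
    rw [this, Set.countable_univ_iff] at hcnt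
    exact hcnt
  classical
  refine ⟨N, hNU, hNcount, rr, ?_, ?_, ?_, hNdisj, ?_⟩
  · exact fun x hx => ⟨hrpos x (hNU hx), hrle x (hNU hx)⟩
  · -- lower bound
    intro z
    by_cases hz : z ∈ U
    · obtain ⟨x, hxN, hxb⟩ := hcov z hz
      have h1 := ENNReal.le_tsum
        (f := fun x : N => (ball (x : X) (rr x)).indicator (1 : X → ℝ≥0∞) z) ⟨x, hxN⟩
      simp only [Set.indicator_of_mem hxb, Pi.one_apply] at h1
      rw [Set.indicator_of_mem hz, Pi.one_apply]
      exact h1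
    · rw [Set.indicator_of_notMem hz]
      exact zero_le
  · -- upper bound
    intro z
    by_cases hz : z ∈ U
    · rw [Set.indicator_of_mem hz, Pi.one_apply, mul_one]
      rw [ENNReal.tsum_eq_iSup_sum]
      refine iSup_le fun s => ?_
      set t := s.filter (fun x : N => z ∈ ball (x : X) (rr x)) with ht
      have hsum : ∑ x ∈ s, (ball (x : X) (rr x)).indicator (1 : X → ℝ≥0∞) z
          = (t.card : ℝ≥0∞) := by
        rw [ht]
        rw [Finset.card_filter]
        push_cast
        rw [Finset.sum_congr rfl (fun x _ => Set.indicator_apply _ _ _)]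
        simp
      rw [hsum]
      set m := μ (ball z (8 * rr z / 3)) with hm
      have hrz := hrpos z hz
      have hm0 : m ≠ 0 := (hsupp z _ (by positivity)).ne'
      have hmtop : m ≠ ∞ := by
        have := hrle z hz
        exact aux_fin μ hR hD z _ (by linarith)
      have hcard : (t.card : ℝ≥0∞) * m ≤ (D : ℝ≥0∞) ^ 5 * m := by
        have hmem : ∀ x ∈ t, z ∈ ball (x : X) (rr x) := fun x hx =>
          (Finset.mem_filter.1 hx).2
        calc (t.card : ℝ≥0∞) * m = ∑ _x ∈ t, m := by
              rw [Finset.sum_const, nsmul_eq_mul]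
          _ ≤ ∑ x ∈ t, (D : ℝ≥0∞) ^ 5 * μ (ball (x : X) (rr x / 3)) :=
              Finset.sum_le_sum fun x hx =>
                (hkey x (hNU x.2) z hz (hmem x hx)).2
          _ = (D : ℝ≥0∞) ^ 5 * ∑ x ∈ t, μ (ball (x : X) (rr x / 3)) := by
              rw [Finset.mul_sum]
          _ ≤ (D : ℝ≥0∞) ^ 5 * m := by
              refine mul_le_mul_right ?_ _
              have hdisj' : (↑t : Set N).PairwiseDisjoint
                  (fun x : N => ball (x : X) (rr x / 3)) := fun a _ b _ hab =>
                hNdisj a.2 b.2 (fun h => hab (Subtype.ext h))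
              rw [← measure_biUnion_finset hdisj' (fun _ _ => measurableSet_ball)]
              refine measure_mono (iUnion₂_subset fun x hx =>
                (hkey x (hNU x.2) z hz (hmem x hx)).1)
      exact (ENNReal.mul_le_mul_iff_left hm0 hmtop).1 hcard
    · have hzero : ∀ x : N, (ball (x : X) (rr x)).indicator (1 : X → ℝ≥0∞) z = 0 :=
        fun x => Set.indicator_of_notMem
          (fun h => hz (hball_sub x (hNU x.2) h)) _
      rw [tsum_congr hzero]
      simp
  · -- condition (c)
    intro x hxN κ hκ
    have hx := hNU hxN
    have hrx := hrpos x hx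
    have hlt : infDist x Uᶜ < κ * rr x := by
      have : infDist x Uᶜ = 2 * rr x := by simp only [hrr]; ring
      rw [this]
      nlinarith
    obtain ⟨y, hyU, hyd⟩ := (infDist_lt_iff hUc).1 hlt
    exact ⟨y, by rwa [mem_ball, dist_comm], hyU⟩
end

section
/- In the Whitney-type decomposition of a proper open set U with diam(U) < R, with r(x) := (1/2) d(x, X\U), the following finite-overlap bound holds: for every x ∈ U, the set N_x := {x' ∈ N : d(x',x) < r(x')} has cardinality at most D_R^5. -/
open MeasureTheory Metric Set ENNReal NNReal

/-- Auxiliary: with doubling up to scale `R`, balls of radius at most `2R` have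
finite measure. -/
lemma aux_finball {X : Type*} [MetricSpace X] [MeasurableSpace X] [BorelSpace X]
    [LocallyCompactSpace X]
    (μ : Measure X) [IsFiniteMeasureOnCompacts μ]
    (R : ℝ) (hR : 0 < R) (D : ℝ≥0)
    (hD : ∀ (x : X), ∀ r ∈ Set.Ioc (0 : ℝ) R, μ (ball x (2 * r)) ≤ (D : ℝ≥0∞) * μ (ball x r))
    (z : X) (a : ℝ) (ha : 0 < a) (haR : a ≤ 2 * R) : μ (ball z a) < ⊤ := by
  obtain ⟨K, hKc, hKn⟩ := exists_compact_mem_nhds z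
  obtain ⟨ε, hε, hεK⟩ := Metric.mem_nhds_iff.mp hKn
  set ε' := min ε a with hε'
  have hε'pos : 0 < ε' := lt_min hε ha
  have hfin0 : μ (ball z ε') < ⊤ :=
    lt_of_le_of_lt (measure_mono (fun p hp => hεK (by
      exact mem_ball.mpr (lt_of_lt_of_le (mem_ball.mp hp) (min_le_left _ _))))) hKc.measure_lt_top
  have claim : ∀ n : ℕ, μ (ball z (min (2 ^ n * ε') (2 * R))) < ⊤ := by
    intro n
    induction n with
    | zero =>
      refine lt_of_le_of_lt (measure_mono (ball_subset_ball ?_)) hfin0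
      simpa using min_le_left ε' (2 * R)
    | succ n ih =>
      have heq : min (2 ^ (n + 1) * ε') (2 * R) = 2 * min (2 ^ n * ε') R := by
        rw [mul_min_of_nonneg _ _ (by norm_num : (0:ℝ) ≤ 2), pow_succ]
        ring_nf
      rw [heq]
      have h1 : min (2 ^ n * ε') R ∈ Set.Ioc (0 : ℝ) R :=
        ⟨lt_min (by positivity) hR, min_le_right _ _⟩
      have h2 := hD z _ h1
      have h3 : μ (ball z (min (2 ^ n * ε') R)) ≤ μ (ball z (min (2 ^ n * ε') (2 * R))) :=
        measure_mono (ball_subset_ball (min_le_min le_rfl (by linarith)))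
      calc μ (ball z (2 * min (2 ^ n * ε') R)) ≤ (D : ℝ≥0∞) * μ (ball z (min (2 ^ n * ε') R)) := h2
        _ ≤ (D : ℝ≥0∞) * μ (ball z (min (2 ^ n * ε') (2 * R))) := by gcongr
        _ < ⊤ := ENNReal.mul_lt_top ENNReal.coe_lt_top ih
  obtain ⟨n, hn⟩ := pow_unbounded_of_one_lt (a / ε') (by norm_num : (1:ℝ) < 2)
  have hle : a ≤ 2 ^ n * ε' := by
    rw [div_lt_iff₀ hε'pos] at hn
    linarith
  refine lt_of_le_of_lt (measure_mono (ball_subset_ball (le_min hle haR))) (claim n)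

/-- finite overlap bound in the Whitney-type decomposition.
Here `r' x = (1/6) d(x, X\U)` and `r x = 3 r' x = (1/2) d(x, X\U)`. -/
theorem stmt_4 {X : Type*} [MetricSpace X] [MeasurableSpace X] [BorelSpace X]
    [LocallyCompactSpace X] [ConnectedSpace X]
    (μ : Measure X) [μ.InnerRegular] [IsFiniteMeasureOnCompacts μ]
    (hsupp : ∀ (x : X) (r : ℝ), 0 < r → 0 < μ (ball x r))
    (R : ℝ) (hR : 0 < R) (D : ℝ≥0) (hD1 : 1 ≤ D)
    (hD : ∀ (x : X), ∀ r ∈ Set.Ioc (0 : ℝ) R, μ (ball x (2 * r)) ≤ (D : ℝ≥0∞) * μ (ball x r))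
    (U : Set X) (hUo : IsOpen U) (hUp : U ≠ Set.univ)
    (hUd : EMetric.diam U < ENNReal.ofReal R)
    (N : Set X) (hNU : N ⊆ U) (hNc : N.Countable)
    (hdisj : N.PairwiseDisjoint (fun x => ball x ((1 / 6) * infDist x Uᶜ)))
    (hcover : U ⊆ ⋃ x ∈ N, ball x (3 * ((1 / 6) * infDist x Uᶜ))) :
    ∀ x ∈ U, {x' | x' ∈ N ∧ dist x' x < (1 / 2) * infDist x' Uᶜ}.Finite ∧
      ({x' | x' ∈ N ∧ dist x' x < (1 / 2) * infDist x' Uᶜ}.ncard : ℝ) ≤ (D : ℝ) ^ 5 := by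
  have hUc : Uᶜ.Nonempty := Set.nonempty_compl.mpr hUp
  have hUclosed : IsClosed Uᶜ := hUo.isClosed_compl
  have hδpos : ∀ z ∈ U, 0 < infDist z Uᶜ := by
    intro z hz
    exact (hUclosed.notMem_iff_infDist_pos hUc).mp (by simpa using hz)
  -- distance between two points of U is < R
  have hdistU : ∀ a ∈ U, ∀ b ∈ U, dist a b < R := by
    intro a ha b hb
    have h1 : edist a b ≤ EMetric.diam U := EMetric.edist_le_diam_of_mem ha hb
    have h2 : ENNReal.ofReal (dist a b) < ENNReal.ofReal R := by
      rw [← edist_dist]; exact lt_of_le_of_lt h1 hUd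
    exact (ENNReal.ofReal_lt_ofReal_iff hR).mp h2
  -- the ball of radius infDist z Uᶜ around z is inside U
  have hballU : ∀ z : X, ball z (infDist z Uᶜ) ⊆ U := by
    intro z p hp
    by_contra hpc
    exact absurd (infDist_le_dist_of_mem (Set.mem_compl hpc)) (not_le.mpr (mem_ball'.mp hp))
  -- the inradius is at most R (uses connectedness)
  have hδR : ∀ z ∈ U, infDist z Uᶜ ≤ R := by
    intro z hz
    by_contra hcon
    push_neg at hcon
    obtain ⟨y, hy⟩ := hUc
    have hyd : R < dist z y := lt_of_lt_of_le hcon (infDist_le_dist_of_mem hy)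
    set t := (R + infDist z Uᶜ) / 2 with ht
    have h1 : t ∈ Set.Icc (dist z z) (dist z y) := by
      constructor
      · simp only [dist_self, ht]; linarith
      · have : t < infDist z Uᶜ := by rw [ht]; linarith
        linarith [infDist_le_dist_of_mem (x := z) hy]
    obtain ⟨w, hw⟩ := intermediate_value_univ z y (continuous_const.dist continuous_id) h1
    simp only [id_eq] at hw
    have hwU : w ∈ U := hballU z (by
      rw [mem_ball']
      rw [hw]; linarith)
    have : dist z w < R := hdistU z hz w hwU
    rw [hw] at this
    linarith
  intro x hx
  set T := {x' | x' ∈ N ∧ dist x' x < (1 / 2) * infDist x' Uᶜ} with hT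
  -- basic facts about members of T
  have hTU : ∀ z ∈ T, z ∈ U := fun z hz => hNU hz.1
  have hTd : ∀ z ∈ T, ∀ w ∈ T, infDist w Uᶜ < 3 * infDist z Uᶜ := by
    intro z hz w hw
    have h1 : dist w z ≤ dist w x + dist z x := dist_triangle_right w z x
    have h2 : infDist w Uᶜ ≤ infDist z Uᶜ + dist w z := infDist_le_infDist_add_dist
    have h3 := hz.2
    have h4 := hw.2
    linarith
  -- key: any finite subset of T has card at most D^5
  have key : ∀ s : Finset X, ↑s ⊆ T → (s.card : ℝ) ≤ (D : ℝ) ^ 5 := by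
    intro s hsT
    rcases s.eq_empty_or_nonempty with rfl | hne
    · simp only [Finset.card_empty, Nat.cast_zero]; positivity
    obtain ⟨x₀, hx₀s, hmin⟩ :=
      s.exists_min_image (fun z => μ (ball z ((1 / 6) * infDist z Uᶜ))) hne
    have hx₀T : x₀ ∈ T := hsT hx₀s
    set δ₀ := infDist x₀ Uᶜ with hδ₀
    have hδ₀pos : 0 < δ₀ := hδpos x₀ (hTU x₀ hx₀T)
    have hδ₀R : δ₀ ≤ R := hδR x₀ (hTU x₀ hx₀T)
    set m := μ (ball x₀ ((1 / 6) * δ₀)) with hm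
    have hm0 : m ≠ 0 := (hsupp x₀ _ (by positivity)).ne'
    have hmtop : m ≠ ⊤ :=
      (aux_finball μ R hR D hD x₀ _ (by positivity) (by linarith)).ne
    -- the big ball
    obtain ⟨B, hB1, hB2⟩ : ∃ B : Set X,
        (∀ z ∈ T, ball z ((1 / 6) * infDist z Uᶜ) ⊆ B) ∧ μ B ≤ (D : ℝ≥0∞) ^ 5 * m := by
      by_cases hc : δ₀ ≤ (3 / 4) * R
      · -- small inradius: B = ball x₀ ((8/3) δ₀), four doublings
        refine ⟨ball x₀ ((8 / 3) * δ₀), ?_, ?_⟩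
        · intro z hz p hp
          have h1 : dist z x < (1 / 2) * infDist z Uᶜ := hz.2
          have h2 : dist x₀ x < (1 / 2) * δ₀ := hx₀T.2
          have h3 : infDist z Uᶜ < 3 * δ₀ := hTd x₀ hx₀T z hz
          have h4 : dist p z < (1 / 6) * infDist z Uᶜ := mem_ball.mp hp
          have h5 : dist p x₀ ≤ dist p z + dist z x + dist x₀ x := by
            have := dist_triangle p z x₀
            have := dist_triangle z x x₀
            have := dist_comm x x₀
            have := dist_comm x₀ x
            linarith [dist_triangle p z x₀, dist_triangle_right z x₀ x]
          rw [mem_ball]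
          linarith
        · have d1 := hD x₀ ((1 / 6) * δ₀) ⟨by positivity, by linarith⟩
          have d2 := hD x₀ ((1 / 3) * δ₀) ⟨by positivity, by linarith⟩
          have d3 := hD x₀ ((2 / 3) * δ₀) ⟨by positivity, by linarith⟩
          have d4 := hD x₀ ((4 / 3) * δ₀) ⟨by positivity, by linarith⟩
          rw [show (2:ℝ) * ((1 / 6) * δ₀) = (1 / 3) * δ₀ by ring] at d1
          rw [show (2:ℝ) * ((1 / 3) * δ₀) = (2 / 3) * δ₀ by ring] at d2
          rw [show (2:ℝ) * ((2 / 3) * δ₀) = (4 / 3) * δ₀ by ring] at d3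
          rw [show (2:ℝ) * ((4 / 3) * δ₀) = (8 / 3) * δ₀ by ring] at d4
          have hD1' : (1 : ℝ≥0∞) ≤ (D : ℝ≥0∞) := by exact_mod_cast hD1
          calc μ (ball x₀ ((8 / 3) * δ₀)) ≤ (D : ℝ≥0∞) * μ (ball x₀ ((4 / 3) * δ₀)) := d4
            _ ≤ (D : ℝ≥0∞) * ((D : ℝ≥0∞) * μ (ball x₀ ((2 / 3) * δ₀))) := by gcongr
            _ ≤ (D : ℝ≥0∞) * ((D : ℝ≥0∞) * ((D : ℝ≥0∞) * μ (ball x₀ ((1 / 3) * δ₀)))) := by gcongr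
            _ ≤ (D : ℝ≥0∞) * ((D : ℝ≥0∞) * ((D : ℝ≥0∞) * ((D : ℝ≥0∞) * m))) := by gcongr
            _ = (D : ℝ≥0∞) ^ 4 * m := by ring
            _ ≤ (D : ℝ≥0∞) ^ 5 * m := by gcongr; norm_num
      · -- large inradius: B = ball x₀ R, three doublings
        push_neg at hc
        refine ⟨ball x₀ R, ?_, ?_⟩
        · intro z hz p hp
          have hzU : z ∈ U := hTU z hz
          have hpU : p ∈ U := hballU z (mem_ball.mp (by
            refine mem_ball.mpr (lt_of_lt_of_le (mem_ball.mp hp) ?_)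
            nlinarith [hδpos z hzU]))
          rw [mem_ball, dist_comm]
          exact hdistU x₀ (hTU x₀ hx₀T) p hpU
        · have d1 := hD x₀ (R / 2) ⟨by positivity, by linarith⟩
          have d2 := hD x₀ (R / 4) ⟨by positivity, by linarith⟩
          have d3 := hD x₀ (R / 8) ⟨by positivity, by linarith⟩
          rw [show (2:ℝ) * (R / 2) = R by ring] at d1
          rw [show (2:ℝ) * (R / 4) = R / 2 by ring] at d2
          rw [show (2:ℝ) * (R / 8) = R / 4 by ring] at d3
          have hsub : ball x₀ (R / 8) ⊆ ball x₀ ((1 / 6) * δ₀) :=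
            ball_subset_ball (by linarith)
          have hD1' : (1 : ℝ≥0∞) ≤ (D : ℝ≥0∞) := by exact_mod_cast hD1
          calc μ (ball x₀ R) ≤ (D : ℝ≥0∞) * μ (ball x₀ (R / 2)) := d1
            _ ≤ (D : ℝ≥0∞) * ((D : ℝ≥0∞) * μ (ball x₀ (R / 4))) := by gcongr
            _ ≤ (D : ℝ≥0∞) * ((D : ℝ≥0∞) * ((D : ℝ≥0∞) * μ (ball x₀ (R / 8)))) := by gcongr
            _ ≤ (D : ℝ≥0∞) * ((D : ℝ≥0∞) * ((D : ℝ≥0∞) * m)) := by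
                gcongr; exact measure_mono hsub
            _ = (D : ℝ≥0∞) ^ 3 * m := by ring
            _ ≤ (D : ℝ≥0∞) ^ 5 * m := by gcongr; norm_num
    -- sum over disjoint balls
    have hdisj' : (↑s : Set X).PairwiseDisjoint (fun z => ball z ((1 / 6) * infDist z Uᶜ)) :=
      hdisj.subset (fun z hz => (hsT hz).1)
    have hsum : ∑ z ∈ s, μ (ball z ((1 / 6) * infDist z Uᶜ)) =
        μ (⋃ z ∈ s, ball z ((1 / 6) * infDist z Uᶜ)) :=
      (measure_biUnion_finset hdisj' (fun z _ => measurableSet_ball)).symm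
    have hunion : (⋃ z ∈ s, ball z ((1 / 6) * infDist z Uᶜ)) ⊆ B :=
      Set.iUnion₂_subset fun z hz => hB1 z (hsT hz)
    have hlower : (s.card : ℝ≥0∞) * m ≤ ∑ z ∈ s, μ (ball z ((1 / 6) * infDist z Uᶜ)) := by
      calc (s.card : ℝ≥0∞) * m = ∑ _z ∈ s, m := by
            rw [Finset.sum_const, nsmul_eq_mul]
        _ ≤ ∑ z ∈ s, μ (ball z ((1 / 6) * infDist z Uᶜ)) :=
            Finset.sum_le_sum fun z hz => hmin z hz
    have hfinal : (s.card : ℝ≥0∞) * m ≤ (D : ℝ≥0∞) ^ 5 * m := by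
      calc (s.card : ℝ≥0∞) * m ≤ ∑ z ∈ s, μ (ball z ((1 / 6) * infDist z Uᶜ)) := hlower
        _ = μ (⋃ z ∈ s, ball z ((1 / 6) * infDist z Uᶜ)) := hsum
        _ ≤ μ B := measure_mono hunion
        _ ≤ (D : ℝ≥0∞) ^ 5 * m := hB2
    have hcard : (s.card : ℝ≥0∞) ≤ (D : ℝ≥0∞) ^ 5 :=
      (ENNReal.mul_le_mul_iff_left hm0 hmtop).mp hfinal
    have : (s.card : ℝ≥0) ≤ D ^ 5 := by exact_mod_cast hcard
    exact_mod_cast this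
  -- conclude finiteness
  have hfin : T.Finite := by
    by_contra hinf
    have hinf' : T.Infinite := hinf
    obtain ⟨t, htT, htc⟩ := hinf'.exists_subset_card_eq (⌊(D : ℝ) ^ 5⌋₊ + 1)
    have h1 := key t htT
    rw [htc] at h1
    have h2 : (D : ℝ) ^ 5 < (⌊(D : ℝ) ^ 5⌋₊ + 1 : ℕ) := by
      push_cast
      exact Nat.lt_floor_add_one _
    linarith
  refine ⟨hfin, ?_⟩
  have h := key hfin.toFinset (by simp)
  rwa [Set.ncard_eq_toFinset_card T hfin]
end

section
/- (L^p bound for the truncated maximal function, local version) Let R > 0 with D_{3R} < ∞. Then for every μ-measurable set E ⊆ X with diam(E) < 6R, every μ-measurable f : X → B, and every p ∈ (1,∞], one has ‖χ_E M_R f‖_{L^p(μ)} ≤ 2 (p')^{1/p} D_{3R}^{4/p} ‖f‖_{L^p(μ;B)}, where p' is the conjugate exponent of p. -/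
open MeasureTheory Metric Set ENNReal NNReal

/-- The uncentred Hardy–Littlewood maximal function truncated at radius `R`. -/
noncomputable def uMax {X : Type*} [MetricSpace X] [MeasurableSpace X]
    {B : Type*} [NormedAddCommGroup B] (μ : MeasureTheory.Measure X) (R : ℝ)
    (f : X → B) (x : X) : ℝ≥0∞ :=
  ⨆ (y : X) (r : ℝ) (_ : r ∈ Set.Ioc (0 : ℝ) R) (_ : x ∈ ball y r),
    (∫⁻ z in ball y r, (‖f z‖₊ : ℝ≥0∞) ∂μ) / μ (ball y r)

/-- The `L^p(μ)` norm of an `ℝ≥0∞`-valued function, `p ∈ [1,∞]`. -/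
noncomputable def lpE {X : Type*} [MeasurableSpace X] (μ : MeasureTheory.Measure X)
    (p : ℝ≥0∞) (g : X → ℝ≥0∞) : ℝ≥0∞ :=
  if p = ∞ then essSup g μ else (∫⁻ x, g x ^ p.toReal ∂μ) ^ (1 / p.toReal)

section Aux

variable {X : Type*} [MetricSpace X] [MeasurableSpace X] [BorelSpace X]
  (μ : MeasureTheory.Measure X) (R : ℝ)

/-- ℝ≥0∞-valued version of the truncated maximal function. -/
noncomputable def vMax (g : X → ℝ≥0∞) (x : X) : ℝ≥0∞ :=
  ⨆ (y : X) (r : ℝ) (_ : r ∈ Set.Ioc (0 : ℝ) R) (_ : x ∈ ball y r),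
    (∫⁻ z in ball y r, g z ∂μ) / μ (ball y r)

theorem uMax_eq_vMax {B : Type*} [NormedAddCommGroup B] (f : X → B) :
    uMax μ R f = vMax μ R (fun z => (‖f z‖₊ : ℝ≥0∞)) := rfl

variable {μ R}

theorem le_vMax {g : X → ℝ≥0∞} {x y : X} {r : ℝ} (hr : r ∈ Set.Ioc (0 : ℝ) R)
    (hx : x ∈ ball y r) :
    (∫⁻ z in ball y r, g z ∂μ) / μ (ball y r) ≤ vMax μ R g x :=
  le_iSup_of_le y <| le_iSup_of_le r <| le_iSup_of_le hr <| le_iSup_of_le hx le_rfl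

theorem vMax_congr {g g' : X → ℝ≥0∞} (h : g =ᵐ[μ] g') : vMax μ R g = vMax μ R g' := by
  unfold vMax
  funext x
  refine iSup_congr fun y => iSup_congr fun r => iSup_congr fun hr => iSup_congr fun hx => ?_
  congr 1
  exact lintegral_congr_ae (ae_restrict_of_ae h)

theorem isOpen_vMax_gt (g : X → ℝ≥0∞) (t : ℝ≥0∞) : IsOpen {x | t < vMax μ R g x} := by
  rw [isOpen_iff_mem_nhds]
  intro x hx
  simp only [mem_setOf_eq, vMax, lt_iSup_iff] at hx
  obtain ⟨y, r, hr, hxy, ht⟩ := hx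
  refine Filter.mem_of_superset (isOpen_ball.mem_nhds hxy) fun x' hx' => ?_
  exact lt_of_lt_of_le ht (le_vMax hr hx')

theorem measurable_vMax (g : X → ℝ≥0∞) : Measurable (vMax μ R g) :=
  measurable_of_Ioi fun t => (isOpen_vMax_gt g t).measurableSet

theorem vMax_add_le (g g₁ g₂ : X → ℝ≥0∞) (hsplit : ∀ z, g z = g₁ z + g₂ z)
    (hg₁ : Measurable g₁) (x : X) :
    vMax μ R g x ≤ vMax μ R g₁ x + vMax μ R g₂ x := by
  refine iSup_le fun y => iSup_le fun r => iSup_le fun hr => iSup_le fun hx => ?_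
  have : (∫⁻ z in ball y r, g z ∂μ) =
      (∫⁻ z in ball y r, g₁ z ∂μ) + ∫⁻ z in ball y r, g₂ z ∂μ := by
    rw [← lintegral_add_left hg₁]
    exact lintegral_congr fun z => hsplit z
  rw [this, ENNReal.add_div]
  exact add_le_add (le_vMax hr hx) (le_vMax hr hx)

theorem vMax_le_const {g : X → ℝ≥0∞} {c : ℝ≥0∞} (hg : ∀ᵐ z ∂μ, g z ≤ c) (x : X) :
    vMax μ R g x ≤ c := by
  refine iSup_le fun y => iSup_le fun r => iSup_le fun hr => iSup_le fun hx => ?_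
  refine ENNReal.div_le_of_le_mul ?_
  calc ∫⁻ z in ball y r, g z ∂μ ≤ ∫⁻ _ in ball y r, c ∂μ :=
        lintegral_mono_ae (ae_restrict_of_ae hg)
    _ = c * μ (ball y r) := by rw [setLIntegral_const]

end Aux

section Weak

variable {X : Type*} [MetricSpace X] [MeasurableSpace X] [BorelSpace X]
  {μ : MeasureTheory.Measure X} [μ.InnerRegular] {R : ℝ}

theorem ball5_doubling {D : ℝ≥0} (hD : ∀ (x : X), ∀ r ∈ Set.Ioc (0 : ℝ) (3 * R),
      μ (ball x (2 * r)) ≤ (D : ℝ≥0∞) * μ (ball x r)) (hR : 0 < R)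
    {x : X} {r : ℝ} (hr : r ∈ Set.Ioc (0 : ℝ) R) :
    μ (ball x (5 * r)) ≤ (D : ℝ≥0∞) ^ 3 * μ (ball x r) := by
  obtain ⟨hr0, hrR⟩ := hr
  have m1 : (3 * r) ∈ Set.Ioc (0 : ℝ) (3 * R) := Set.mem_Ioc.mpr ⟨by linarith, by linarith⟩
  have m2 : (2 * r) ∈ Set.Ioc (0 : ℝ) (3 * R) := Set.mem_Ioc.mpr ⟨by linarith, by linarith⟩
  have m3 : r ∈ Set.Ioc (0 : ℝ) (3 * R) := Set.mem_Ioc.mpr ⟨by linarith, by linarith⟩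
  have h1 : μ (ball x (5 * r)) ≤ μ (ball x (2 * (3 * r))) :=
    measure_mono (ball_subset_ball (by linarith))
  have h2 : μ (ball x (2 * (3 * r))) ≤ (D : ℝ≥0∞) * μ (ball x (3 * r)) := hD x (3 * r) m1
  have h3a : μ (ball x (3 * r)) ≤ μ (ball x (2 * (2 * r))) :=
    measure_mono (ball_subset_ball (by linarith))
  have h3 : μ (ball x (3 * r)) ≤ (D : ℝ≥0∞) * μ (ball x (2 * r)) :=
    h3a.trans (hD x (2 * r) m2)
  have h4 : μ (ball x (2 * r)) ≤ (D : ℝ≥0∞) * μ (ball x r) := hD x r m3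
  calc μ (ball x (5 * r)) ≤ (D : ℝ≥0∞) * μ (ball x (3 * r)) := h1.trans h2
    _ ≤ (D : ℝ≥0∞) * ((D : ℝ≥0∞) * μ (ball x (2 * r))) := by gcongr
    _ ≤ (D : ℝ≥0∞) * ((D : ℝ≥0∞) * ((D : ℝ≥0∞) * μ (ball x r))) := by gcongr
    _ = (D : ℝ≥0∞) ^ 3 * μ (ball x r) := by ring

/-- Weak (1,1) bound for the truncated maximal function. -/
theorem weak_bound (hsupp : ∀ (x : X) (r : ℝ), 0 < r → 0 < μ (ball x r))
    (hR : 0 < R) {D : ℝ≥0}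
    (hD : ∀ (x : X), ∀ r ∈ Set.Ioc (0 : ℝ) (3 * R),
      μ (ball x (2 * r)) ≤ (D : ℝ≥0∞) * μ (ball x r))
    (g : X → ℝ≥0∞) {t : ℝ≥0∞} (ht : 0 < t) :
    t * μ {x | t < vMax μ R g x} ≤ (D : ℝ≥0∞) ^ 3 * ∫⁻ z, g z ∂μ := by
  set U := {x | t < vMax μ R g x} with hU
  have hUopen : IsOpen U := isOpen_vMax_gt g t
  rw [hUopen.measurableSet.measure_eq_iSup_isCompact]
  simp only [ENNReal.mul_iSup]
  refine iSup_le fun K => iSup_le fun hKU => iSup_le fun hK => ?_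
  -- choose balls
  have key : ∀ x : X, x ∈ U → ∃ (y : X) (r : ℝ), r ∈ Set.Ioc (0 : ℝ) R ∧ x ∈ ball y r ∧
      t * μ (ball y r) < ∫⁻ z in ball y r, g z ∂μ := by
    intro x hx
    simp only [hU, mem_setOf_eq, vMax, lt_iSup_iff] at hx
    obtain ⟨y, r, hr, hxy, hlt⟩ := hx
    have hμ0 : μ (ball y r) ≠ 0 := (hsupp y r hr.1).ne'
    have hμt : μ (ball y r) ≠ ∞ := by
      intro h
      rw [h, ENNReal.div_top] at hlt
      exact (not_lt_of_ge bot_le) hlt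
    exact ⟨y, r, hr, hxy,
      (ENNReal.lt_div_iff_mul_lt (Or.inl hμ0) (Or.inl hμt)).mp hlt⟩
  choose! y r hr hmem hint using key
  have hcover : K ⊆ ⋃ x ∈ K, ball (y x) (r x) := fun x hx =>
    mem_biUnion hx (hmem x (hKU hx))
  obtain ⟨b, hbK, hbfin, hbcover⟩ :=
    hK.elim_finite_subcover_image (fun x _ => isOpen_ball) hcover
  obtain ⟨u, hub, hdisj, hvit⟩ :=
    Vitali.exists_disjoint_subfamily_covering_enlargement
      (fun x => ball (y x) (r x)) b r 2 one_lt_two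
      (fun a ha => (hr a (hKU (hbK ha))).1.le) R
      (fun a ha => (hr a (hKU (hbK ha))).2)
      (fun a ha => ⟨a, hmem a (hKU (hbK ha))⟩)
  have hufin : u.Finite := hbfin.subset hub
  have hcover5 : K ⊆ ⋃ c ∈ u, ball (y c) (5 * r c) := by
    intro x hx
    obtain ⟨a, ha, hxa⟩ := mem_iUnion₂.mp (hbcover hx)
    obtain ⟨c, hc, hne, hrc⟩ := hvit a ha
    obtain ⟨w, hw1, hw2⟩ := hne
    refine mem_biUnion hc ?_
    have h1 : dist x (y c) ≤ dist x (y a) + dist (y a) w + dist w (y c) :=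
      dist_triangle4 x (y a) w (y c)
    have hra : 0 < r a := (hr a (hKU (hbK ha))).1
    simp only [mem_ball] at hxa hw1 hw2 ⊢
    rw [dist_comm (y a) w] at h1
    nlinarith [dist_nonneg (x := x) (y := y a)]
  set s := hufin.toFinset with hs
  have hsub : ∀ c ∈ s, c ∈ u := fun c hc => hufin.mem_toFinset.mp hc
  calc t * μ K ≤ t * μ (⋃ c ∈ s, ball (y c) (5 * r c)) := by
        refine mul_le_mul_right (measure_mono ?_) t
        refine hcover5.trans ?_
        intro z hz
        obtain ⟨c, hc, hzc⟩ := mem_iUnion₂.mp hz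
        exact mem_iUnion₂.mpr ⟨c, hufin.mem_toFinset.mpr hc, hzc⟩
    _ ≤ t * ∑ c ∈ s, μ (ball (y c) (5 * r c)) :=
        mul_le_mul_right (measure_biUnion_finset_le s _) t
    _ = ∑ c ∈ s, t * μ (ball (y c) (5 * r c)) := by rw [Finset.mul_sum]
    _ ≤ ∑ c ∈ s, (D : ℝ≥0∞) ^ 3 * (t * μ (ball (y c) (r c))) := by
        refine Finset.sum_le_sum fun c hc => ?_
        have h5 := ball5_doubling (x := y c) hD hR (hr c (hKU (hbK (hub (hsub c hc)))))
        calc t * μ (ball (y c) (5 * r c)) ≤ t * ((D : ℝ≥0∞) ^ 3 * μ (ball (y c) (r c))) :=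
              mul_le_mul_right h5 t
          _ = (D : ℝ≥0∞) ^ 3 * (t * μ (ball (y c) (r c))) := by ring
    _ ≤ ∑ c ∈ s, (D : ℝ≥0∞) ^ 3 * ∫⁻ z in ball (y c) (r c), g z ∂μ := by
        refine Finset.sum_le_sum fun c hc => ?_
        exact mul_le_mul_right (hint c (hKU (hbK (hub (hsub c hc))))).le _
    _ = (D : ℝ≥0∞) ^ 3 * ∑ c ∈ s, ∫⁻ z in ball (y c) (r c), g z ∂μ := by
        rw [Finset.mul_sum]
    _ = (D : ℝ≥0∞) ^ 3 * ∫⁻ z in ⋃ c ∈ s, ball (y c) (r c), g z ∂μ := by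
        congr 1
        refine (lintegral_biUnion_finset ?_ (fun _ _ => measurableSet_ball) _).symm
        intro c hc c' hc' hne
        exact hdisj (hsub c (Finset.mem_coe.mp hc)) (hsub c' (Finset.mem_coe.mp hc')) hne
    _ ≤ (D : ℝ≥0∞) ^ 3 * ∫⁻ z, g z ∂μ := by
        gcongr
        exact Measure.restrict_le_self

end Weak

section Layercake

theorem lint_cut (r c : ℝ) (hr : 0 < r) (hc : 0 ≤ c) {a : ℝ≥0∞} (ha : a ≠ ∞) :
    ∫⁻ t in Set.Ioi (0 : ℝ), (if ENNReal.ofReal t < a then ENNReal.ofReal (c * t ^ (r - 1)) else 0)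
      = ENNReal.ofReal (c / r) * a ^ r := by
  set s := a.toReal with hs
  have step1 : ∫⁻ t in Set.Ioi (0 : ℝ),
      (if ENNReal.ofReal t < a then ENNReal.ofReal (c * t ^ (r - 1)) else 0)
      = ∫⁻ t in Set.Ioo (0 : ℝ) s, ENNReal.ofReal (c * t ^ (r - 1)) := by
    rw [← Set.Ioi_inter_Iio (a := (0:ℝ)) (b := s), Set.inter_comm,
      ← Measure.restrict_restrict measurableSet_Iio, ← lintegral_indicator measurableSet_Iio]
    refine setLIntegral_congr_fun measurableSet_Ioi ?_
    intro t ht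
    beta_reduce
    rw [Set.indicator_apply]
    have : ENNReal.ofReal t < a ↔ t ∈ Set.Iio s := by
      rw [Set.mem_Iio, hs, ENNReal.ofReal_lt_iff_lt_toReal (le_of_lt ht) ha]
    by_cases h : ENNReal.ofReal t < a
    · rw [if_pos h, if_pos (this.mp h)]
    · rw [if_neg h, if_neg (fun hh => h (this.mpr hh))]
  rw [step1]
  rcases le_or_gt s 0 with hs0 | hs0
  · have ha0 : a = 0 := by
      rcases (ENNReal.toReal_eq_zero_iff a).mp (le_antisymm hs0 ENNReal.toReal_nonneg) with h | h
      · exact h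
      · exact absurd h ha
    rw [Set.Ioo_eq_empty (not_lt.mpr hs0),
      Measure.restrict_empty, lintegral_zero_measure, ha0, ENNReal.zero_rpow_of_pos hr, mul_zero]
  · have hint : MeasureTheory.IntegrableOn (fun t : ℝ => c * t ^ (r - 1)) (Set.Ioo 0 s) := by
      have h1 : IntervalIntegrable (fun t : ℝ => t ^ (r - 1)) volume 0 s :=
        intervalIntegral.intervalIntegrable_rpow' (by linarith)
      rw [intervalIntegrable_iff, Set.uIoc_of_le hs0.le] at h1
      exact (h1.mono_set Set.Ioo_subset_Ioc_self).const_mul c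
    have hnn : 0 ≤ᵐ[volume.restrict (Set.Ioo (0:ℝ) s)] fun t : ℝ => c * t ^ (r - 1) := by
      filter_upwards [self_mem_ae_restrict measurableSet_Ioo] with t ht
      exact mul_nonneg hc (Real.rpow_nonneg ht.1.le _)
    rw [← MeasureTheory.ofReal_integral_eq_lintegral_ofReal hint hnn]
    have hre : ∫ t in Set.Ioo (0:ℝ) s, c * t ^ (r - 1) = c / r * s ^ r := by
      rw [MeasureTheory.integral_const_mul, ← MeasureTheory.integral_Ioc_eq_integral_Ioo,
        ← intervalIntegral.integral_of_le hs0.le,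
        integral_rpow (Or.inl (by linarith : (-1:ℝ) < r - 1))]
      rw [sub_add_cancel, Real.zero_rpow hr.ne', sub_zero]
      field_simp
    rw [hre, ENNReal.ofReal_mul (by positivity), ← ENNReal.ofReal_rpow_of_pos hs0, hs,
      ENNReal.ofReal_toReal ha]

theorem lint_cut_top (r c : ℝ) (hr : 1 ≤ r) (hc : 0 < c) :
    ∫⁻ t in Set.Ioi (0 : ℝ),
      (if ENNReal.ofReal t < (∞ : ℝ≥0∞) then ENNReal.ofReal (c * t ^ (r - 1)) else 0) = ∞ := by
  have heq : ∀ t : ℝ, (if ENNReal.ofReal t < (∞ : ℝ≥0∞) then ENNReal.ofReal (c * t ^ (r - 1))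
      else 0) = ENNReal.ofReal (c * t ^ (r - 1)) := fun t => if_pos ENNReal.ofReal_lt_top
  simp only [heq]
  have hmono : volume.restrict (Set.Ioi (1 : ℝ)) ≤ volume.restrict (Set.Ioi (0 : ℝ)) :=
    Measure.restrict_mono (Set.Ioi_subset_Ioi zero_le_one) le_rfl
  refine top_le_iff.mp ?_
  calc (∞ : ℝ≥0∞) = ENNReal.ofReal c * volume (Set.Ioi (1 : ℝ)) := by
        rw [Real.volume_Ioi, ENNReal.mul_top (ENNReal.ofReal_pos.mpr hc).ne']
    _ = ∫⁻ _ in Set.Ioi (1 : ℝ), ENNReal.ofReal c := by rw [setLIntegral_const]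
    _ ≤ ∫⁻ t in Set.Ioi (1 : ℝ), ENNReal.ofReal (c * t ^ (r - 1)) := by
        refine lintegral_mono_ae ?_
        filter_upwards [self_mem_ae_restrict measurableSet_Ioi] with t ht
        refine ENNReal.ofReal_le_ofReal ?_
        nlinarith [Real.one_le_rpow (le_of_lt ht) (by linarith : (0:ℝ) ≤ r - 1)]
    _ ≤ ∫⁻ t in Set.Ioi (0 : ℝ), ENNReal.ofReal (c * t ^ (r - 1)) := lintegral_mono' hmono le_rfl

theorem layercake_ennreal {X : Type*} [MeasurableSpace X] (μ : MeasureTheory.Measure X)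
    (h : X → ℝ≥0∞) (hh : Measurable h) {q : ℝ} (hq : 1 < q) :
    ∫⁻ x, h x ^ q ∂μ
      ≤ ∫⁻ t in Set.Ioi (0 : ℝ), μ {x | ENNReal.ofReal t < h x} * ENNReal.ofReal (q * t ^ (q - 1))
        ∂volume := by
  have hq0 : (0:ℝ) < q := by linarith
  rcases eq_or_ne (μ {x | h x = ∞}) 0 with h0 | h0
  · -- a.e. finite case: use the real-valued layer cake from mathlib
    set f : X → ℝ := fun x => (h x).toReal with hf
    have hfm : AEMeasurable f μ := (ENNReal.measurable_toReal.comp hh).aemeasurable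
    have hfnn : 0 ≤ᵐ[μ] f := Filter.Eventually.of_forall fun x => ENNReal.toReal_nonneg
    have hae : ∀ᵐ x ∂μ, h x ≠ ∞ := by
      rw [Filter.eventually_iff, mem_ae_iff]
      simpa [compl_setOf] using h0
    have key := lintegral_rpow_eq_lintegral_meas_lt_mul μ hfnn hfm hq0
    have lhs_eq : ∫⁻ x, h x ^ q ∂μ = ∫⁻ x, ENNReal.ofReal (f x ^ q) ∂μ := by
      refine lintegral_congr_ae ?_
      filter_upwards [hae] with x hx
      rw [hf]
      simp only
      rw [ENNReal.toReal_rpow, ENNReal.ofReal_toReal]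
      exact ENNReal.rpow_ne_top_of_nonneg hq0.le hx
    rw [lhs_eq, key]
    rw [← lintegral_const_mul' (ENNReal.ofReal q) _ ENNReal.ofReal_ne_top]
    refine lintegral_mono_ae ?_
    filter_upwards [self_mem_ae_restrict measurableSet_Ioi] with t ht
    have hms : μ {a | t < f a} = μ {x | ENNReal.ofReal t < h x} := by
      have hsd : symmDiff {a | t < f a} {x | ENNReal.ofReal t < h x} ⊆ {x | h x = ∞} := by
        intro x hx
        rcases Set.mem_symmDiff.mp hx with ⟨hx1, hx2⟩ | ⟨hx1, hx2⟩ <;>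
        · simp only [mem_setOf_eq, hf] at hx1 hx2 ⊢
          by_contra hxt
          rw [← ENNReal.ofReal_lt_iff_lt_toReal (le_of_lt ht) hxt] at *
          tauto
      have hnull : μ (symmDiff {a | t < f a} {x | ENNReal.ofReal t < h x}) = 0 :=
        measure_mono_null hsd h0
      exact measure_congr (measure_symmDiff_eq_zero_iff.mp hnull)
    rw [← hms, ← mul_assoc, mul_comm (ENNReal.ofReal q) _, mul_assoc,
      ← ENNReal.ofReal_mul (le_of_lt hq0)]
  · -- h is infinite on a set of positive measure: both sides are ∞
    have hlhs : ∫⁻ x, h x ^ q ∂μ = ∞ := by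
      refine top_le_iff.mp ?_
      calc (∞:ℝ≥0∞) = ∞ * μ {x | h x = ∞} := by
            rw [ENNReal.top_mul h0]
        _ = ∫⁻ _ in {x | h x = ∞}, ∞ ∂μ := by rw [setLIntegral_const]
        _ ≤ ∫⁻ x in {x | h x = ∞}, h x ^ q ∂μ := by
            refine lintegral_mono_ae ?_
            filter_upwards [self_mem_ae_restrict (hh (measurableSet_singleton ∞))] with x hx
            simp [hx, ENNReal.top_rpow_of_pos hq0]
        _ ≤ ∫⁻ x, h x ^ q ∂μ := setLIntegral_le_lintegral _ _
    rw [hlhs]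
    refine top_le_iff.mpr (top_le_iff.mp ?_)
    have hsub : ∀ t : ℝ, {x | h x = ∞} ⊆ {x | ENNReal.ofReal t < h x} := by
      intro t x hx
      rw [mem_setOf_eq] at hx ⊢
      rw [hx]
      exact ENNReal.ofReal_lt_top
    have hdiv : ∫⁻ t in Set.Ioi (0:ℝ), ENNReal.ofReal (q * t ^ (q-1)) ∂volume = ∞ := by
      have := lint_cut_top q q hq.le hq0
      simpa only [if_pos ENNReal.ofReal_lt_top] using this
    calc (∞:ℝ≥0∞) = ∫⁻ t in Set.Ioi (0:ℝ), μ {x | h x = ∞} * ENNReal.ofReal (q * t ^ (q-1))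
          ∂volume := by
          rcases eq_or_ne (μ {x | h x = ∞}) ∞ with hm | hm
          · rw [hm]
            refine (top_le_iff.mp ?_).symm
            calc (∞:ℝ≥0∞) = ∫⁻ t in Set.Ioi (0:ℝ), ENNReal.ofReal (q * t ^ (q-1)) ∂volume :=
                  hdiv.symm
              _ ≤ _ := lintegral_mono fun t => le_mul_of_one_le_left' le_top
          · rw [lintegral_const_mul' _ _ hm, hdiv, ENNReal.mul_top h0]
      _ ≤ _ := by
          refine lintegral_mono_ae ?_
          filter_upwards [self_mem_ae_restrict measurableSet_Ioi] with t ht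
          exact mul_le_mul_left (measure_mono (hsub t)) _

end Layercake

/-- local `L^p` bound, `p ∈ (1,∞]`, for the truncated uncentred maximal
function, with constant `2 (p')^{1/p} D^{4/p}` where `D` is the doubling constant for
radii `≤ 3R` and `p'` is the conjugate exponent of `p`. -/
theorem stmt_7 {X : Type*} [MetricSpace X] [MeasurableSpace X] [BorelSpace X]
    [LocallyCompactSpace X] (μ : Measure X) [μ.InnerRegular] [IsFiniteMeasureOnCompacts μ]
    (hsupp : ∀ (x : X) (r : ℝ), 0 < r → 0 < μ (ball x r))
    (R : ℝ) (hR : 0 < R) (D : ℝ≥0) (hD1 : 1 ≤ D)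
    (hD : ∀ (x : X), ∀ r ∈ Set.Ioc (0 : ℝ) (3 * R),
      μ (ball x (2 * r)) ≤ (D : ℝ≥0∞) * μ (ball x r))
    {B : Type*} [NormedAddCommGroup B]
    (E : Set X) (hE : MeasurableSet E) (hEd : EMetric.diam E < ENNReal.ofReal (6 * R))
    (f : X → B) (hf : AEStronglyMeasurable f μ)
    (p p' : ℝ≥0∞) (hp : 1 < p) (hp' : 1 / p + 1 / p' = 1) :
    lpE μ p (E.indicator (uMax μ R f)) ≤
      2 * p' ^ (1 / p).toReal * (D : ℝ≥0∞) ^ (4 * (1 / p).toReal) *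
        lpE μ p (fun x => (‖f x‖₊ : ℝ≥0∞)) := by
  set g : X → ℝ≥0∞ := fun x => (‖f x‖₊ : ℝ≥0∞) with hgdef
  have hgae : AEMeasurable g μ := hf.enorm
  obtain ⟨g₀, hg₀m, hgg₀⟩ : ∃ g₀, Measurable g₀ ∧ g =ᵐ[μ] g₀ :=
    ⟨hgae.mk g, hgae.measurable_mk, hgae.ae_eq_mk⟩
  have hD1' : (1 : ℝ≥0∞) ≤ (D : ℝ≥0∞) := by exact_mod_cast hD1
  have huv : uMax μ R f = vMax μ R g₀ := (uMax_eq_vMax μ R f).trans (vMax_congr hgg₀)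
  rcases eq_or_ne p ∞ with hptop | hptop
  · -- p = ∞
    subst hptop
    simp only [lpE, if_pos rfl, one_div, ENNReal.inv_top, ENNReal.toReal_zero, mul_zero,
      ENNReal.rpow_zero, mul_one]
    have hbd : ∀ x, E.indicator (uMax μ R f) x ≤ essSup g μ := by
      intro x
      have hvle : vMax μ R g₀ x ≤ essSup g μ := by
        refine vMax_le_const ?_ x
        filter_upwards [hgg₀, ENNReal.ae_le_essSup g] with z h1 h2
        rw [← h1]; exact h2
      by_cases hx : x ∈ E
      · rw [Set.indicator_of_mem hx, huv]; exact hvle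
      · rw [Set.indicator_of_notMem hx]; exact zero_le
    calc essSup (E.indicator (uMax μ R f)) μ ≤ essSup g μ :=
          essSup_le_of_ae_le _ (Filter.Eventually.of_forall hbd)
      _ ≤ 2 * essSup g μ := le_mul_of_one_le_left' one_le_two
  · -- 1 < p < ∞
    set q : ℝ := p.toReal with hq
    have hpne0 : p ≠ 0 := (zero_lt_one.trans hp).ne'
    have hq1 : 1 < q := by
      rw [hq, ← ENNReal.toReal_one]
      exact ENNReal.toReal_strict_mono hptop hp
    have hq0 : (0:ℝ) < q := by linarith
    -- conjugate exponent facts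
    have hpinv_lt : p⁻¹ < 1 := ENNReal.inv_lt_one.mpr hp
    have h1p : p⁻¹ + p'⁻¹ = 1 := by simpa only [one_div] using hp'
    have hpinv_ne_top : p⁻¹ ≠ ∞ := by
      simp [ENNReal.inv_ne_top, hpne0]
    have hp'inv : p'⁻¹ = 1 - p⁻¹ := by
      rw [← h1p, ENNReal.add_sub_cancel_left hpinv_ne_top]
    have hsubpos : 1 - p⁻¹ ≠ 0 := (tsub_pos_of_lt hpinv_lt).ne'
    have hp'top : p' ≠ ∞ := by
      have h2 : p'⁻¹ ≠ 0 := hp'inv ▸ hsubpos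
      simpa [ENNReal.inv_eq_zero] using h2
    have hp'toReal : p'.toReal = q / (q - 1) := by
      have h1 : (p'⁻¹).toReal = 1 - q⁻¹ := by
        rw [hp'inv, ENNReal.toReal_sub_of_le hpinv_lt.le ENNReal.one_ne_top,
          ENNReal.toReal_one, ENNReal.toReal_inv, hq]
      rw [ENNReal.toReal_inv] at h1
      have : p'.toReal = (1 - q⁻¹)⁻¹ := by rw [← h1, inv_inv]
      rw [this, show (1 - q⁻¹) = (q-1)/q by field_simp, inv_div]
    have hp'val : ENNReal.ofReal (q / (q - 1)) = p' := by
      rw [← hp'toReal, ENNReal.ofReal_toReal hp'top]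
    have hp'one : (1:ℝ≥0∞) ≤ p' := by
      refine ENNReal.inv_le_one.mp ?_
      rw [hp'inv]; exact tsub_le_self
    -- exponent bookkeeping
    have hexp : (1 / p).toReal = 1 / q := by
      rw [one_div, ENNReal.toReal_inv, hq, one_div]
    rw [hexp]
    simp only [lpE, if_neg hptop, ← hq]
    set A : ℝ≥0∞ := ∫⁻ x, g₀ x ^ q ∂μ with hA
    have hRHSint : ∫⁻ x, g x ^ q ∂μ = A := by
      refine lintegral_congr_ae ?_
      filter_upwards [hgg₀] with x hx
      rw [hx]
    rw [hRHSint]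
    set h : X → ℝ≥0∞ := E.indicator (vMax μ R g₀) with hhdef
    have hhm : Measurable h := (measurable_vMax g₀).indicator hE
    have hLHSfun : E.indicator (uMax μ R f) = h := by rw [hhdef, huv]
    rw [hLHSfun]
    have hconst_ne : (2:ℝ≥0∞) * p' ^ (1/q) * (D:ℝ≥0∞) ^ (4 * (1/q)) ≠ 0 := by
      have h1 : (1:ℝ≥0∞) ≤ p' ^ (1/q) := by
        calc (1:ℝ≥0∞) = 1 ^ (1/q) := (ENNReal.one_rpow _).symm
          _ ≤ p' ^ (1/q) := ENNReal.rpow_le_rpow hp'one (by positivity)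
      have h2 : (1:ℝ≥0∞) ≤ (D:ℝ≥0∞) ^ (4 * (1/q)) := by
        calc (1:ℝ≥0∞) = 1 ^ (4 * (1/q)) := (ENNReal.one_rpow _).symm
          _ ≤ (D:ℝ≥0∞) ^ (4 * (1/q)) := ENNReal.rpow_le_rpow hD1' (by positivity)
      exact mul_ne_zero (mul_ne_zero two_ne_zero (zero_lt_one.trans_le h1).ne')
        (zero_lt_one.trans_le h2).ne' 
    rcases eq_or_ne A ∞ with hAtop | hAtop
    · rw [hAtop]
      rw [ENNReal.top_rpow_of_pos (by positivity), ENNReal.mul_top hconst_ne]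
      exact le_top
    -- main case : A < ∞
    have haefin : ∀ᵐ z ∂μ, g₀ z ≠ ∞ := by
      have := ae_lt_top (hg₀m.pow measurable_const) (hA ▸ hAtop)
      filter_upwards [this] with z hz
      intro hzt
      rw [hzt, ENNReal.top_rpow_of_pos hq0] at hz
      exact absurd hz (lt_irrefl _)
    -- sigma-finite restriction
    set V : Set X := {z | 0 < g₀ z} with hVdef
    have hV : MeasurableSet V := measurableSet_lt measurable_const hg₀m
    set ν : Measure X := μ.restrict V with hνdef
    haveI hνsf : SigmaFinite ν := by
      refine ⟨⟨⟨fun n => {z | ((n:ℝ≥0∞)+1)⁻¹ < g₀ z} ∪ Vᶜ, fun _ => trivial, ?_, ?_⟩⟩⟩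
      · intro n
        set ε : ℝ≥0∞ := ((n:ℝ≥0∞)+1)⁻¹ ^ q with hε
        have hn1 : ((n:ℝ≥0∞)+1) ≠ 0 := by simp
        have hn2 : ((n:ℝ≥0∞)+1) ≠ ∞ := by
          simp [ENNReal.add_ne_top]
        have hε0 : ε ≠ 0 := by
          rw [hε]
          exact (ENNReal.rpow_pos (ENNReal.inv_pos.mpr hn2) (by simp [hn1])).ne'
        have hεtop : ε ≠ ∞ := by
          rw [hε]
          exact ENNReal.rpow_ne_top_of_nonneg hq0.le (by simp [hn1])
        have hsub : ({z | ((n:ℝ≥0∞)+1)⁻¹ < g₀ z} ∪ Vᶜ) ∩ V ⊆ {z | ε ≤ g₀ z ^ q} := by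
          rintro z ⟨hz1 | hz1, hz2⟩
          · rw [mem_setOf_eq] at hz1 ⊢
            rw [hε]
            exact ENNReal.rpow_le_rpow hz1.le hq0.le
          · exact absurd hz2 hz1
        calc (μ.restrict V) ({z | ((n:ℝ≥0∞)+1)⁻¹ < g₀ z} ∪ Vᶜ)
            = μ (({z | ((n:ℝ≥0∞)+1)⁻¹ < g₀ z} ∪ Vᶜ) ∩ V) := Measure.restrict_apply' hV
          _ ≤ μ {z | ε ≤ g₀ z ^ q} := measure_mono hsub
          _ ≤ A / ε := meas_ge_le_lintegral_div (hg₀m.pow measurable_const).aemeasurable hε0 hεtop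
          _ < ∞ := ENNReal.div_lt_top hAtop hε0
      · rw [Set.eq_univ_iff_forall]
        intro z
        by_cases hz : 0 < g₀ z
        · obtain ⟨n, hn⟩ := ENNReal.exists_inv_nat_lt hz.ne'
          refine mem_iUnion.mpr ⟨n, Set.mem_union_left _ ?_⟩
          rw [mem_setOf_eq]
          refine lt_of_le_of_lt ?_ hn
          exact ENNReal.inv_le_inv.mpr (le_self_add)
        · exact mem_iUnion.mpr ⟨0, Set.mem_union_right _ hz⟩
    -- per-level bound
    have key2 : ∀ t : ℝ, 0 < t →
        μ {x | ENNReal.ofReal t < h x} * ENNReal.ofReal (q * t ^ (q - 1)) ≤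
        2 * (D:ℝ≥0∞)^3 *
          ∫⁻ z, (if ENNReal.ofReal t < g₀ z * 2 then g₀ z * ENNReal.ofReal (q * t ^ (q-1-1))
            else 0) ∂ν := by
      intro t ht
      set T : ℝ≥0∞ := ENNReal.ofReal t with hT
      have hT0 : T ≠ 0 := (ENNReal.ofReal_pos.mpr ht).ne'
      have hTtop : T ≠ ∞ := ENNReal.ofReal_ne_top
      set g₁ : X → ℝ≥0∞ := fun z => if T/2 < g₀ z then g₀ z else 0 with hg₁def
      have hg₁m : Measurable g₁ :=
        Measurable.ite (measurableSet_lt measurable_const hg₀m) hg₀m measurable_const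
      have hsub1 : {x | T < h x} ⊆ {x | T/2 < vMax μ R g₁ x} := by
        intro x hx
        rw [mem_setOf_eq] at hx ⊢
        have hx' : T < vMax μ R g₀ x := by
          by_cases hxE : x ∈ E
          · rwa [hhdef, Set.indicator_of_mem hxE] at hx
          · rw [hhdef, Set.indicator_of_notMem hxE] at hx
            exact absurd hx (by simp)
        by_contra hcon
        push_neg at hcon
        set g₂ : X → ℝ≥0∞ := fun z => if T/2 < g₀ z then 0 else g₀ z with hg₂def
        have hsplit : ∀ z, g₀ z = g₁ z + g₂ z := by
          intro z
          rw [hg₁def, hg₂def]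
          simp only
          split <;> simp
        have h2 : vMax μ R g₀ x ≤ vMax μ R g₁ x + vMax μ R g₂ x :=
          vMax_add_le g₀ g₁ g₂ hsplit hg₁m x
        have h3 : vMax μ R g₂ x ≤ T/2 := by
          refine vMax_le_const (Filter.Eventually.of_forall fun z => ?_) x
          rw [hg₂def]
          simp only
          split
          · exact zero_le
          · next hc => exact not_lt.mp hc
        have : vMax μ R g₀ x ≤ T := by
          calc vMax μ R g₀ x ≤ vMax μ R g₁ x + vMax μ R g₂ x := h2
            _ ≤ T/2 + T/2 := add_le_add hcon h3
            _ = T := ENNReal.add_halves T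
        exact absurd hx' (not_lt.mpr this)
      have hhalf0 : T/2 ≠ 0 := (ENNReal.div_pos hT0 ENNReal.ofNat_ne_top).ne'
      have hhalftop : T/2 ≠ ∞ := (ENNReal.div_lt_top hTtop two_ne_zero).ne
      have weak := weak_bound hsupp hR hD g₁ (t := T/2) (pos_iff_ne_zero.mpr hhalf0)
      set Bint : ℝ≥0∞ := ∫⁻ z, g₁ z ∂μ with hBint
      have hμh : μ {x | T < h x} ≤ (D:ℝ≥0∞)^3 * Bint / (T/2) := by
        refine le_trans (measure_mono hsub1) ?_
        refine (ENNReal.le_div_iff_mul_le (Or.inl hhalf0) (Or.inl hhalftop)).mpr ?_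
        rw [mul_comm]
        exact weak
      -- rewrite Bint over ν
      have hBν : Bint = ∫⁻ z, g₁ z ∂ν := by
        rw [hνdef, ← lintegral_indicator hV]
        refine lintegral_congr fun z => ?_
        rw [Set.indicator_apply]
        by_cases hzV : z ∈ V
        · rw [if_pos hzV]
        · rw [if_neg hzV, hg₁def]
          have : g₀ z = 0 := by
            by_contra hc
            exact hzV (pos_iff_ne_zero.mpr hc)
          simp [this]
      have hPT : ENNReal.ofReal (q * t ^ (q-1)) / T = ENNReal.ofReal (q * t ^ (q-1-1)) := by
        rw [hT, ← ENNReal.ofReal_div_of_pos ht]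
        congr 1
        have hstep : t ^ (q-1-1) = t ^ (q-1) / t := by
          rw [show q-1-1 = (q-1) - 1 by ring, Real.rpow_sub ht, Real.rpow_one]
        rw [hstep, mul_div_assoc]
      calc μ {x | T < h x} * ENNReal.ofReal (q * t ^ (q - 1))
          ≤ ((D:ℝ≥0∞)^3 * Bint / (T/2)) * ENNReal.ofReal (q * t ^ (q - 1)) :=
            mul_le_mul_left hμh _
        _ = 2 * (D:ℝ≥0∞)^3 * (Bint * (ENNReal.ofReal (q * t ^ (q-1)) / T)) := by
            rw [div_eq_mul_inv, ENNReal.inv_div (Or.inl ENNReal.ofNat_ne_top) (Or.inl two_ne_zero),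
              div_eq_mul_inv, div_eq_mul_inv]
            ring
        _ = 2 * (D:ℝ≥0∞)^3 * (Bint * ENNReal.ofReal (q * t ^ (q-1-1))) := by rw [hPT]
        _ = 2 * (D:ℝ≥0∞)^3 *
              ∫⁻ z, (if ENNReal.ofReal t < g₀ z * 2 then g₀ z * ENNReal.ofReal (q * t ^ (q-1-1))
                else 0) ∂ν := by
            congr 1
            rw [hBν, ← lintegral_mul_const' _ _ ENNReal.ofReal_ne_top]
            refine lintegral_congr fun z => ?_
            simp only [hg₁def]
            have hcond : (T/2 < g₀ z) = (T < g₀ z * 2) := by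
              exact propext (ENNReal.div_lt_iff (Or.inl two_ne_zero) (Or.inl ENNReal.ofNat_ne_top))
            simp only [ite_mul, zero_mul, hcond]
            rfl
    -- put everything together
    have hswap : ∫⁻ t in Set.Ioi (0:ℝ),
        (∫⁻ z, (if ENNReal.ofReal t < g₀ z * 2 then g₀ z * ENNReal.ofReal (q * t ^ (q-1-1))
          else 0) ∂ν) ∂volume
        = ∫⁻ z, (∫⁻ t in Set.Ioi (0:ℝ),
            (if ENNReal.ofReal t < g₀ z * 2 then g₀ z * ENNReal.ofReal (q * t ^ (q-1-1))
              else 0) ∂volume) ∂ν := by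
      refine lintegral_lintegral_swap ?_
      refine Measurable.aemeasurable ?_
      refine Measurable.ite ?_ ?_ measurable_const
      · exact measurableSet_lt (ENNReal.measurable_ofReal.comp measurable_fst)
          ((hg₀m.comp measurable_snd).mul measurable_const)
      · exact (hg₀m.comp measurable_snd).mul
          (((measurable_fst.pow measurable_const).const_mul q).ennreal_ofReal)
    have hinner : ∀ᵐ z ∂ν, (∫⁻ t in Set.Ioi (0:ℝ),
        (if ENNReal.ofReal t < g₀ z * 2 then g₀ z * ENNReal.ofReal (q * t ^ (q-1-1))
          else 0) ∂volume)
        = ENNReal.ofReal (q/(q-1)) * (2:ℝ≥0∞)^(q-1) * g₀ z ^ q := by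
      filter_upwards [ae_restrict_of_ae haefin] with z hz
      have hz2 : g₀ z * 2 ≠ ∞ := ENNReal.mul_ne_top hz ENNReal.ofNat_ne_top
      calc ∫⁻ t in Set.Ioi (0:ℝ),
            (if ENNReal.ofReal t < g₀ z * 2 then g₀ z * ENNReal.ofReal (q * t ^ (q-1-1)) else 0)
              ∂volume
          = ∫⁻ t in Set.Ioi (0:ℝ),
            g₀ z * (if ENNReal.ofReal t < g₀ z * 2 then ENNReal.ofReal (q * t ^ (q-1-1)) else 0)
              ∂volume := by
            refine lintegral_congr fun t => ?_
            rw [mul_ite, mul_zero]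
        _ = g₀ z * ∫⁻ t in Set.Ioi (0:ℝ),
            (if ENNReal.ofReal t < g₀ z * 2 then ENNReal.ofReal (q * t ^ (q-1-1)) else 0)
              ∂volume := lintegral_const_mul' _ _ hz
        _ = g₀ z * (ENNReal.ofReal (q/(q-1)) * (g₀ z * 2) ^ (q-1)) := by
            rw [lint_cut (q-1) q (by linarith) hq0.le hz2]
        _ = ENNReal.ofReal (q/(q-1)) * (2:ℝ≥0∞)^(q-1) * g₀ z ^ q := by
            rw [ENNReal.mul_rpow_of_nonneg _ _ (by linarith : (0:ℝ) ≤ q - 1)]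
            have hzq : g₀ z * g₀ z ^ (q-1) = g₀ z ^ q := by
              rcases eq_or_ne (g₀ z) 0 with h0 | h0
              · rw [h0, ENNReal.zero_rpow_of_pos (by linarith), ENNReal.zero_rpow_of_pos hq0,
                  zero_mul]
              · nth_rewrite 1 [← ENNReal.rpow_one (g₀ z)]
                rw [← ENNReal.rpow_add _ _ h0 hz]
                congr 1
                ring
            calc g₀ z * (ENNReal.ofReal (q/(q-1)) * (g₀ z ^ (q-1) * 2 ^ (q-1)))
                = ENNReal.ofReal (q/(q-1)) * 2^(q-1) * (g₀ z * g₀ z ^ (q-1)) := by ring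
              _ = ENNReal.ofReal (q/(q-1)) * (2:ℝ≥0∞)^(q-1) * g₀ z ^ q := by rw [hzq]
    have hDfin : ((2:ℝ≥0∞) * (D:ℝ≥0∞)^3) ≠ ∞ :=
      ENNReal.mul_ne_top ENNReal.ofNat_ne_top (by simp [ENNReal.pow_ne_top, ENNReal.coe_ne_top])
    have hcfin : ENNReal.ofReal (q/(q-1)) * (2:ℝ≥0∞)^(q-1) ≠ ∞ :=
      ENNReal.mul_ne_top ENNReal.ofReal_ne_top
        (ENNReal.rpow_ne_top_of_nonneg (by linarith) ENNReal.ofNat_ne_top)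
    have main : ∫⁻ x, h x ^ q ∂μ ≤ (2:ℝ≥0∞)^q * p' * (D:ℝ≥0∞)^(4:ℝ) * A := by
      calc ∫⁻ x, h x ^ q ∂μ
          ≤ ∫⁻ t in Set.Ioi (0:ℝ), μ {x | ENNReal.ofReal t < h x} * ENNReal.ofReal (q * t^(q-1))
              ∂volume := layercake_ennreal μ h hhm hq1
        _ ≤ ∫⁻ t in Set.Ioi (0:ℝ), 2 * (D:ℝ≥0∞)^3 *
              (∫⁻ z, (if ENNReal.ofReal t < g₀ z * 2 then g₀ z * ENNReal.ofReal (q * t ^ (q-1-1))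
                else 0) ∂ν) ∂volume := by
            refine lintegral_mono_ae ?_
            filter_upwards [self_mem_ae_restrict measurableSet_Ioi] with t ht
            exact key2 t ht
        _ = 2 * (D:ℝ≥0∞)^3 * ∫⁻ t in Set.Ioi (0:ℝ),
              (∫⁻ z, (if ENNReal.ofReal t < g₀ z * 2 then g₀ z * ENNReal.ofReal (q * t ^ (q-1-1))
                else 0) ∂ν) ∂volume := lintegral_const_mul' _ _ hDfin
        _ = 2 * (D:ℝ≥0∞)^3 * ∫⁻ z, (∫⁻ t in Set.Ioi (0:ℝ),
              (if ENNReal.ofReal t < g₀ z * 2 then g₀ z * ENNReal.ofReal (q * t ^ (q-1-1))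
                else 0) ∂volume) ∂ν := by rw [hswap]
        _ = 2 * (D:ℝ≥0∞)^3 *
              ∫⁻ z, ENNReal.ofReal (q/(q-1)) * (2:ℝ≥0∞)^(q-1) * g₀ z ^ q ∂ν := by
            rw [lintegral_congr_ae hinner]
        _ = 2 * (D:ℝ≥0∞)^3 * (ENNReal.ofReal (q/(q-1)) * (2:ℝ≥0∞)^(q-1) *
              ∫⁻ z, g₀ z ^ q ∂ν) := by
            rw [lintegral_const_mul' _ _ hcfin]
        _ ≤ 2 * (D:ℝ≥0∞)^3 * (ENNReal.ofReal (q/(q-1)) * (2:ℝ≥0∞)^(q-1) * A) := by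
            gcongr
            rw [hνdef, hA]
            exact setLIntegral_le_lintegral _ _
        _ ≤ (2:ℝ≥0∞)^q * p' * (D:ℝ≥0∞)^(4:ℝ) * A := by
            rw [hp'val]
            have h2q : 2 * ((2:ℝ≥0∞)^(q-1)) = (2:ℝ≥0∞)^q := by
              nth_rewrite 1 [← ENNReal.rpow_one 2]
              rw [← ENNReal.rpow_add _ _ two_ne_zero ENNReal.ofNat_ne_top]
              congr 1
              ring
            have hD34 : ((D:ℝ≥0∞))^3 ≤ (D:ℝ≥0∞)^(4:ℝ) := by
              rw [show ((D:ℝ≥0∞))^(3:ℕ) = (D:ℝ≥0∞)^((3:ℕ):ℝ) by rw [ENNReal.rpow_natCast]]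
              exact ENNReal.rpow_le_rpow_of_exponent_le hD1' (by norm_num)
            calc 2 * (D:ℝ≥0∞)^3 * (p' * (2:ℝ≥0∞)^(q-1) * A)
                = (2 * (2:ℝ≥0∞)^(q-1)) * p' * ((D:ℝ≥0∞)^3) * A := by ring
              _ ≤ (2 * (2:ℝ≥0∞)^(q-1)) * p' * ((D:ℝ≥0∞)^(4:ℝ)) * A := by gcongr
              _ = (2:ℝ≥0∞)^q * p' * (D:ℝ≥0∞)^(4:ℝ) * A := by rw [h2q]
    -- conclude by taking q-th roots
    calc (∫⁻ x, h x ^ q ∂μ) ^ (1/q)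
        ≤ ((2:ℝ≥0∞)^q * p' * (D:ℝ≥0∞)^(4:ℝ) * A) ^ (1/q) :=
          ENNReal.rpow_le_rpow main (by positivity)
      _ = 2 * p' ^ (1/q) * (D:ℝ≥0∞) ^ (4 * (1/q)) * A ^ (1/q) := by
          rw [ENNReal.mul_rpow_of_nonneg _ _ (by positivity : (0:ℝ) ≤ 1/q),
            ENNReal.mul_rpow_of_nonneg _ _ (by positivity : (0:ℝ) ≤ 1/q),
            ENNReal.mul_rpow_of_nonneg _ _ (by positivity : (0:ℝ) ≤ 1/q)]
          rw [← ENNReal.rpow_mul (2:ℝ≥0∞) q (1/q), mul_one_div_cancel hq0.ne', ENNReal.rpow_one,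
            ← ENNReal.rpow_mul (D:ℝ≥0∞) 4 (1/q)]
end

section
/- (Lebesgue differentiation, local doubling case) Let R > 0 with D_{3R} < ∞. Then for every f ∈ L^1_loc(μ; B), the averages ⨍_{B(x,r)} f dμ converge to f(x) as r → 0+, for μ-almost every x ∈ X. -/
set_option linter.unusedSectionVars false

open MeasureTheory Metric Set ENNReal NNReal Filter Topology

section Aux
variable {X : Type*} [MetricSpace X] [MeasurableSpace X] [BorelSpace X]
    [LocallyCompactSpace X] {μ : Measure X} [μ.InnerRegular] [IsFiniteMeasureOnCompacts μ]
    {R : ℝ} {D : ℝ≥0}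

lemma iterate_doubling (hR : 0 < R)
    (hD : ∀ (x : X), ∀ r ∈ Set.Ioc (0 : ℝ) (3 * R),
      μ (ball x (2 * r)) ≤ (D : ℝ≥0∞) * μ (ball x r)) :
    ∀ (n : ℕ) (x : X) (a : ℝ), 0 < a → 2 ^ n * a ≤ 6 * R →
      μ (ball x (2 ^ n * a)) ≤ (D : ℝ≥0∞) ^ n * μ (ball x a) := by
  intro n
  induction n with
  | zero => intro x a ha _; simp
  | succ n ih =>
    intro x a ha h
    have hp : (0:ℝ) < 2 ^ n := by positivity
    have ha' : (0:ℝ) < 2 ^ n * a := by positivity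
    have h2 : (2:ℝ) ^ n * a ≤ 3 * R := by
      have : (2:ℝ) ^ (n+1) * a = 2 * (2 ^ n * a) := by ring
      nlinarith [this ▸ h]
    have e : (2:ℝ) ^ (n+1) * a = 2 * (2 ^ n * a) := by ring
    rw [e]
    calc μ (ball x (2 * (2 ^ n * a))) ≤ (D : ℝ≥0∞) * μ (ball x (2 ^ n * a)) :=
          hD x _ ⟨ha', h2⟩
      _ ≤ (D : ℝ≥0∞) * ((D : ℝ≥0∞) ^ n * μ (ball x a)) := by
          gcongr
          exact ih x a ha (by nlinarith)
      _ = (D : ℝ≥0∞) ^ (n+1) * μ (ball x a) := by ring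

lemma meas_ball_lt_top (hR : 0 < R)
    (hD : ∀ (x : X), ∀ r ∈ Set.Ioc (0 : ℝ) (3 * R),
      μ (ball x (2 * r)) ≤ (D : ℝ≥0∞) * μ (ball x r)) :
    ∀ (x : X) (ρ : ℝ), ρ ≤ 2 * R → μ (ball x ρ) < ∞ := by
  classical
  intro x ρ hρ
  obtain ⟨r, rpos, hr⟩ := exists_isCompact_closedBall x
  set ε := min r R with hε
  have hεpos : 0 < ε := lt_min rpos hR
  have hεR : ε ≤ R := min_le_right _ _
  have hfin : μ (ball x ε) < ∞ := by
    have hsub : ball x ε ⊆ closedBall x r :=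
      (ball_subset_closedBall).trans (closedBall_subset_closedBall (min_le_left _ _))
    exact lt_of_le_of_lt (measure_mono hsub) hr.measure_lt_top
  have hex : ∃ n : ℕ, 2 * R ≤ 2 ^ n * ε := by
    obtain ⟨n, hn⟩ := pow_unbounded_of_one_lt ((2 * R) / ε) (one_lt_two (α := ℝ))
    exact ⟨n, by rw [div_lt_iff₀ hεpos] at hn; nlinarith⟩
  set n := Nat.find hex with hn
  have hn1 : 2 * R ≤ 2 ^ n * ε := Nat.find_spec hex
  have hnle : 2 ^ n * ε ≤ 6 * R := by
    rcases Nat.eq_zero_or_pos n with h0 | h0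
    · rw [h0]; norm_num; linarith
    · have := Nat.find_min hex (m := n - 1) (by omega)
      push_neg at this
      have he : (2:ℝ) ^ n = 2 * 2 ^ (n - 1) := by
        rw [← pow_succ']
        congr 1
        omega
      rw [he]
      nlinarith
  calc μ (ball x ρ) ≤ μ (ball x (2 ^ n * ε)) := measure_mono (ball_subset_ball (by linarith))
    _ ≤ (D : ℝ≥0∞) ^ n * μ (ball x ε) := iterate_doubling hR hD n x ε hεpos hnle
    _ < ∞ := ENNReal.mul_lt_top (ENNReal.pow_lt_top ENNReal.coe_lt_top) hfin

lemma isSeparable_ball (hR : 0 < R)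
    (hsupp : ∀ (x : X) (r : ℝ), 0 < r → 0 < μ (ball x r))
    (hD : ∀ (x : X), ∀ r ∈ Set.Ioc (0 : ℝ) (3 * R),
      μ (ball x (2 * r)) ≤ (D : ℝ≥0∞) * μ (ball x r)) :
    ∀ (z : X) (ρ : ℝ), ρ ≤ 2 * R → TopologicalSpace.IsSeparable (ball z ρ) := by
  intro z ρ hρ
  rcases le_or_gt ρ 0 with h0 | h0
  · rw [ball_eq_empty.2 h0]
    exact Set.countable_empty.isSeparable
  have hfin : μ (ball z ρ) < ∞ := meas_ball_lt_top hR hD z ρ hρ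
  -- choose compacts approximating from inside
  have happrox : ∀ m : ℕ, ∃ K : Set X, K ⊆ ball z ρ ∧ IsCompact K ∧
      μ (ball z ρ \ K) ≤ 1 / (m + 1 : ℝ≥0∞) := by
    intro m
    have hmeas : MeasurableSet (ball z ρ) := measurableSet_ball
    have := hmeas.exists_isCompact_diff_lt (μ := μ) hfin.ne
      (ε := 1 / (m + 1 : ℝ≥0∞)) (by simp)
    obtain ⟨K, hK1, hK2, hK3⟩ := this
    exact ⟨K, hK1, hK2, hK3.le⟩
  choose K hK1 hK2 hK3 using happrox
  set S := ⋃ m, K m with hS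
  have hSsep : TopologicalSpace.IsSeparable S :=
    TopologicalSpace.isSeparable_iUnion.2 fun m => (hK2 m).isSeparable
  have hnull : μ (ball z ρ \ S) = 0 := by
    have : ∀ m : ℕ, μ (ball z ρ \ S) ≤ 1 / (m + 1 : ℝ≥0∞) := fun m =>
      le_trans (measure_mono (diff_subset_diff_right (subset_iUnion K m))) (hK3 m)
    have lim : Tendsto (fun m : ℕ => 1 / ((m : ℝ≥0∞) + 1)) atTop (𝓝 0) := by
      simp only [one_div]
      exact ENNReal.tendsto_inv_nat_nhds_zero.comp (tendsto_add_atTop_nat 1) |>.congr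
        (by intro n; simp [Nat.cast_add])
    exact le_antisymm (ge_of_tendsto' lim fun m => this m) bot_le
  -- every point of the ball is in the closure of S
  have hsub : ball z ρ ⊆ closure S := by
    intro x hx
    by_contra hxc
    obtain ⟨ε, hεpos, hεball⟩ : ∃ ε > 0, ∀ y ∈ ball x ε, y ∉ S := by
      obtain ⟨ε, hεpos, hεo⟩ := Metric.isOpen_iff.1 isClosed_closure.isOpen_compl x hxc
      exact ⟨ε, hεpos, fun y hy hyS => (hεo hy) (subset_closure hyS)⟩
    have hε' : 0 < min ε (ρ - dist x z) := lt_min hεpos (by simp [mem_ball] at hx; linarith)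
    have hsubset : ball x (min ε (ρ - dist x z)) ⊆ ball z ρ \ S := by
      intro y hy
      constructor
      · rw [mem_ball] at *
        have := lt_of_lt_of_le hy (min_le_right _ _)
        calc dist y z ≤ dist y x + dist x z := dist_triangle _ _ _
          _ < ρ := by linarith
      · intro hyS
        have hyx : y ∈ ball x ε := by
          rw [mem_ball] at *
          exact lt_of_lt_of_le hy (min_le_left _ _)
        exact hεball y hyx hyS
    have := (hsupp x _ hε').trans_le (le_trans (measure_mono hsubset) hnull.le)
    simp at this
  exact hSsep.closure.mono hsub

end Aux

section Chain
variable {X : Type*} [MetricSpace X] [MeasurableSpace X] [BorelSpace X]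
    [LocallyCompactSpace X] {μ : Measure X} [μ.InnerRegular] [IsFiniteMeasureOnCompacts μ]
    {R : ℝ} {D : ℝ≥0}

def chainRel (R : ℝ) (a b : X) : Prop :=
  Relation.ReflTransGen (fun u v => dist u v < R / 2) a b

lemma chainRel_refl (R : ℝ) (x : X) : chainRel R x x := Relation.ReflTransGen.refl

lemma chainRel_symm {R : ℝ} {x y : X} (h : chainRel R x y) : chainRel R y x := by
  have hsym : Symmetric (fun u v : X => dist u v < R / 2) := fun u v h => by
    show dist v u < R / 2
    rw [dist_comm]; exact h
  haveI : Std.Symm (fun u v : X => dist u v < R / 2) := ⟨hsym⟩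
  exact Relation.ReflTransGen.symmetric.symm _ _ h

def chainClass (R : ℝ) (x : X) : Set X := {y | chainRel R x y}

lemma mem_chainClass_self (R : ℝ) (x : X) : x ∈ chainClass R x := chainRel_refl R x

lemma ball_subset_chainClass {R : ℝ} {x y : X} (hy : y ∈ chainClass R x) :
    ball y (R / 2) ⊆ chainClass R x :=
  fun _ hz => Relation.ReflTransGen.tail hy (mem_ball'.1 hz)

lemma isOpen_chainClass (R : ℝ) (x : X) (hR : 0 < R) : IsOpen (chainClass R x) :=
  Metric.isOpen_iff.2 fun _ hy => ⟨R / 2, by linarith, ball_subset_chainClass hy⟩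

lemma chainClass_eq {R : ℝ} {x y : X} (h : y ∈ chainClass R x) :
    chainClass R y = chainClass R x := by
  ext z
  exact ⟨fun hz => Relation.ReflTransGen.trans h hz,
    fun hz => Relation.ReflTransGen.trans (chainRel_symm h) hz⟩

lemma chainClass_separated {R : ℝ} {x y w : X} (hy : y ∉ chainClass R x)
    (hw : w ∈ chainClass R x) : R / 2 ≤ dist w y := by
  by_contra hlt
  push_neg at hlt
  exact hy (Relation.ReflTransGen.tail hw hlt)

lemma isSeparable_chainClass (hR : 0 < R)
    (hsupp : ∀ (x : X) (r : ℝ), 0 < r → 0 < μ (ball x r))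
    (hD : ∀ (x : X), ∀ r ∈ Set.Ioc (0 : ℝ) (3 * R),
      μ (ball x (2 * r)) ≤ (D : ℝ≥0∞) * μ (ball x r)) (x : X) :
    TopologicalSpace.IsSeparable (chainClass R x) := by
  let T : ℕ → Set X := fun n =>
    Nat.rec {x} (fun _ s => {y | ∃ z ∈ s, dist z y < R / 2}) n
  have hTsucc : ∀ n, T (n + 1) = {y | ∃ z ∈ T n, dist z y < R / 2} := fun n => rfl
  have hUnion : chainClass R x = ⋃ n, T n := by
    apply subset_antisymm
    · intro y hy
      induction hy with
      | refl => exact mem_iUnion.2 ⟨0, rfl⟩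
      | tail h1 h2 ih =>
        obtain ⟨n, hn⟩ := mem_iUnion.1 ih
        exact mem_iUnion.2 ⟨n + 1, ⟨_, hn, h2⟩⟩
    · rw [iUnion_subset_iff]
      intro n
      induction n with
      | zero =>
        intro y hy
        rw [show T 0 = {x} from rfl, mem_singleton_iff] at hy
        rw [hy]
        exact mem_chainClass_self R x
      | succ n ih =>
        intro y hy
        rw [hTsucc n] at hy
        obtain ⟨z, hz, hdz⟩ := hy
        exact Relation.ReflTransGen.tail (ih hz) hdz
  rw [hUnion]
  refine TopologicalSpace.isSeparable_iUnion.2 ?_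
  intro n
  induction n with
  | zero => exact (Set.countable_singleton x).isSeparable
  | succ n ih =>
    obtain ⟨c, hc_count, hc⟩ := ih
    haveI : Countable c := hc_count.to_subtype
    have hsub : T (n + 1) ⊆ ⋃ w : c, ball (w : X) R := by
      intro y hy
      rw [hTsucc n] at hy
      obtain ⟨z, hz, hdz⟩ := hy
      obtain ⟨w, hwc, hwz⟩ := Metric.mem_closure_iff.1 (hc hz) (R / 2) (by linarith)
      refine mem_iUnion.2 ⟨⟨w, hwc⟩, ?_⟩
      rw [mem_ball]
      calc dist y w ≤ dist y z + dist z w := dist_triangle _ _ _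
        _ < R := by rw [dist_comm y z]; linarith
    have : TopologicalSpace.IsSeparable (⋃ w : c, ball (w : X) R) :=
      TopologicalSpace.isSeparable_iUnion.2 fun w : c =>
        isSeparable_ball hR hsupp hD (w : X) R (by linarith)
    exact this.mono hsub

end Chain

section Z
variable {X : Type*} [MetricSpace X] [MeasurableSpace X] [BorelSpace X]
    [LocallyCompactSpace X] {μ : Measure X} [μ.InnerRegular] [IsFiniteMeasureOnCompacts μ]
    {R : ℝ} {D : ℝ≥0}

lemma tendsto_ball_average_of_closedBall (hR : 0 < R)
    (hsupp : ∀ (x : X) (r : ℝ), 0 < r → 0 < μ (ball x r))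
    (hD : ∀ (x : X), ∀ r ∈ Set.Ioc (0 : ℝ) (3 * R),
      μ (ball x (2 * r)) ≤ (D : ℝ≥0∞) * μ (ball x r))
    {B : Type*} [NormedAddCommGroup B] [NormedSpace ℝ B] [CompleteSpace B]
    {f : X → B} (x : X) (hint : IntegrableAtFilter f (𝓝 x) μ)
    (h2 : Tendsto (fun r : ℝ => ⨍ y in closedBall x r, ‖f y - f x‖ ∂μ) (𝓝[>] 0) (𝓝 0)) :
    Tendsto (fun r : ℝ => ⨍ y in ball x r, f y ∂μ) (𝓝[>] 0) (𝓝 (f x)) := by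
  have hfin := meas_ball_lt_top hR hD (μ := μ)
  rw [tendsto_iff_norm_sub_tendsto_zero]
  obtain ⟨s, hs_mem, hs_int⟩ := hint
  obtain ⟨ε₀, hε₀pos, hε₀⟩ := Metric.mem_nhds_iff.1 hs_mem
  set r₀ := min R (ε₀ / 2) with hr₀
  have hr₀pos : 0 < r₀ := lt_min hR (by linarith)
  have key : ∀ r ∈ Ioc (0 : ℝ) r₀,
      ‖(⨍ y in ball x r, f y ∂μ) - f x‖ ≤
        (D : ℝ) * ⨍ y in closedBall x r, ‖f y - f x‖ ∂μ := by
    intro r hr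
    obtain ⟨hrpos, hrle⟩ := hr
    have hrR : r ≤ R := hrle.trans (min_le_left _ _)
    have hrε : r < ε₀ := lt_of_le_of_lt (hrle.trans (min_le_right _ _)) (by linarith)
    have hball : 0 < μ (ball x r) := hsupp x r hrpos
    have hballfin : μ (ball x r) < ∞ := hfin x r (by linarith)
    have hcb_le : μ (closedBall x r) ≤ (D : ℝ≥0∞) * μ (ball x r) := by
      calc μ (closedBall x r) ≤ μ (ball x (2 * r)) :=
            measure_mono (closedBall_subset_ball (by linarith))
        _ ≤ (D : ℝ≥0∞) * μ (ball x r) := hD x r ⟨hrpos, by linarith⟩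
    have hcbfin : μ (closedBall x r) < ∞ :=
      lt_of_le_of_lt hcb_le (ENNReal.mul_lt_top ENNReal.coe_lt_top hballfin)
    have hIcb : IntegrableOn f (closedBall x r) μ :=
      hs_int.mono_set ((closedBall_subset_ball hrε).trans hε₀)
    have hIball : IntegrableOn f (ball x r) μ := hIcb.mono_set ball_subset_closedBall
    set a := (μ (ball x r)).toReal with ha
    set b := (μ (closedBall x r)).toReal with hb
    have apos : 0 < a := ENNReal.toReal_pos hball.ne' hballfin.ne
    have hba : b ≤ (D : ℝ) * a := by
      have := ENNReal.toReal_mono (by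
        exact ENNReal.mul_ne_top ENNReal.coe_ne_top hballfin.ne) hcb_le
      rwa [ENNReal.toReal_mul, ENNReal.coe_toReal] at this
    have hIcb_sub : IntegrableOn (fun y => f y - f x) (closedBall x r) μ :=
      hIcb.sub (integrableOn_const hcbfin.ne)
    have hIball_sub : IntegrableOn (fun y => f y - f x) (ball x r) μ :=
      hIcb_sub.mono_set ball_subset_closedBall
    have e1 : ∫ y in ball x r, (f y - f x) ∂μ =
        (∫ y in ball x r, f y ∂μ) - (μ (ball x r)).toReal • f x := by
      rw [integral_sub hIball (integrableOn_const hballfin.ne), setIntegral_const, measureReal_def]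
    have e2 : (⨍ y in ball x r, f y ∂μ) - f x =
        a⁻¹ • ∫ y in ball x r, (f y - f x) ∂μ := by
      rw [setAverage_eq, measureReal_def, e1, smul_sub, ← ha, smul_smul, inv_mul_cancel₀ apos.ne', one_smul]
    rw [e2, norm_smul, norm_inv, Real.norm_eq_abs, abs_of_pos apos]
    have step1 : ‖∫ y in ball x r, (f y - f x) ∂μ‖ ≤ ∫ y in ball x r, ‖f y - f x‖ ∂μ :=
      norm_integral_le_integral_norm _
    have step2 : ∫ y in ball x r, ‖f y - f x‖ ∂μ ≤ ∫ y in closedBall x r, ‖f y - f x‖ ∂μ := by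
      apply setIntegral_mono_set hIcb_sub.norm
      · exact Eventually.of_forall fun y => norm_nonneg _
      · exact HasSubset.Subset.eventuallyLE (ball_subset_closedBall : ball x r ⊆ closedBall x r)
    have e3 : ∫ y in closedBall x r, ‖f y - f x‖ ∂μ =
        b * ⨍ y in closedBall x r, ‖f y - f x‖ ∂μ := by
      rw [setAverage_eq, measureReal_def, ← hb, smul_eq_mul, ← mul_assoc, mul_inv_cancel₀, one_mul]
      exact (ENNReal.toReal_pos ((hsupp x r hrpos).trans_le
        (measure_mono ball_subset_closedBall)).ne' hcbfin.ne).ne'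
    have hAnn : 0 ≤ ⨍ y in closedBall x r, ‖f y - f x‖ ∂μ := by
      rw [setAverage_eq, smul_eq_mul]
      exact mul_nonneg (by positivity) (setIntegral_nonneg measurableSet_closedBall
        fun y _ => norm_nonneg _)
    calc a⁻¹ * ‖∫ y in ball x r, (f y - f x) ∂μ‖
        ≤ a⁻¹ * ∫ y in closedBall x r, ‖f y - f x‖ ∂μ := by
          apply mul_le_mul_of_nonneg_left (step1.trans step2) (by positivity)
      _ = (a⁻¹ * b) * ⨍ y in closedBall x r, ‖f y - f x‖ ∂μ := by rw [e3]; ring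
      _ ≤ (D : ℝ) * ⨍ y in closedBall x r, ‖f y - f x‖ ∂μ := by
          apply mul_le_mul_of_nonneg_right _ hAnn
          rw [inv_mul_le_iff₀ apos]
          nlinarith [hba]
  have hlim : Tendsto (fun r : ℝ => (D : ℝ) * ⨍ y in closedBall x r, ‖f y - f x‖ ∂μ)
      (𝓝[>] 0) (𝓝 0) := by
    have := h2.const_mul (D : ℝ)
    simpa using this
  apply squeeze_zero' (Eventually.of_forall fun r => norm_nonneg _) _ hlim
  filter_upwards [Ioc_mem_nhdsGT_of_mem ⟨le_refl (0:ℝ), hr₀pos⟩] with r hr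
  exact key r hr

end Z

section G
variable {X : Type*} [MetricSpace X] [MeasurableSpace X] [BorelSpace X]
    [LocallyCompactSpace X] {μ : Measure X} [μ.InnerRegular] [IsFiniteMeasureOnCompacts μ]
    {R : ℝ} {D : ℝ≥0}

lemma classGood (hR : 0 < R)
    (hsupp : ∀ (x : X) (r : ℝ), 0 < r → 0 < μ (ball x r))
    (hD : ∀ (x : X), ∀ r ∈ Set.Ioc (0 : ℝ) (3 * R),
      μ (ball x (2 * r)) ≤ (D : ℝ≥0∞) * μ (ball x r))
    {B : Type*} [NormedAddCommGroup B] [NormedSpace ℝ B] [CompleteSpace B]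
    {f : X → B} (hf : LocallyIntegrable f μ)
    (U : Set X) (hUopen : IsOpen U) (hUsep : TopologicalSpace.IsSeparable U)
    (hUthick : ∀ x ∈ U, ball x (R / 2) ⊆ U) :
    ∃ N : Set X, MeasurableSet N ∧ μ N = 0 ∧ N ⊆ U ∧ ∀ x ∈ U \ N,
      Tendsto (fun r : ℝ => ⨍ y in ball x r, f y ∂μ) (𝓝[>] 0) (𝓝 (f x)) := by
  have hfin := meas_ball_lt_top hR hD (μ := μ)
  have hU : MeasurableSet U := hUopen.measurableSet
  haveI : TopologicalSpace.SeparableSpace U := hUsep.separableSpace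
  haveI : SecondCountableTopology U := UniformSpace.secondCountable_of_separable U
  have emb : MeasurableEmbedding (Subtype.val : U → X) := MeasurableEmbedding.subtype_coe hU
  set ν : Measure U := μ.comap Subtype.val with hνdef
  -- subtype balls
  have hcb_pre : ∀ (x : U) (r : ℝ),
      Metric.closedBall x r = Subtype.val ⁻¹' (closedBall (x : X) r) := by
    intro x r
    ext y
    simp only [mem_closedBall, Set.mem_preimage, Subtype.dist_eq]
  have hν_cb : ∀ (x : U) (r : ℝ), 0 < r → r < R / 2 →
      ν (Metric.closedBall x r) = μ (closedBall (x : X) r) := by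
    intro x r hrpos hrR
    rw [hcb_pre, comap_subtype_coe_apply hU,
      Subtype.image_preimage_coe]
    congr 1
    rw [Set.inter_eq_right]
    exact (closedBall_subset_ball hrR).trans (hUthick x x.2)
  -- locally finite
  haveI hνloc : IsLocallyFiniteMeasure ν := by
    constructor
    intro x
    refine ⟨Metric.ball x (R / 4), ball_mem_nhds x (by linarith), ?_⟩
    have : Metric.ball x (R / 4) = Subtype.val ⁻¹' (ball (x : X) (R / 4)) := by
      ext y; simp only [mem_ball, Set.mem_preimage, Subtype.dist_eq]
    rw [this, comap_subtype_coe_apply hU]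
    exact lt_of_le_of_lt (measure_mono (by
      intro y hy
      obtain ⟨z, hz, rfl⟩ := hy
      exact hz)) (hfin (x : X) (R / 4) (by linarith))
  -- doubling
  haveI hνdoub : IsUnifLocDoublingMeasure ν := by
    constructor
    refine ⟨D ^ 2, ?_⟩
    filter_upwards [Ioc_mem_nhdsGT_of_mem (⟨le_refl (0 : ℝ), by linarith⟩ : (0:ℝ) ∈ Set.Ico 0 (R/8))]
      with ε hε x
    obtain ⟨hεpos, hεle⟩ := hε
    have h2ε : (0:ℝ) < 2 * ε := by linarith
    rw [hν_cb x (2 * ε) h2ε (by linarith), hν_cb x ε hεpos (by linarith)]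
    calc μ (closedBall (x : X) (2 * ε)) ≤ μ (ball (x : X) (2 * (2 * ε))) :=
          measure_mono (closedBall_subset_ball (by linarith))
      _ ≤ (D : ℝ≥0∞) * μ (ball (x : X) (2 * ε)) := hD (x : X) (2 * ε) ⟨h2ε, by linarith⟩
      _ ≤ (D : ℝ≥0∞) * ((D : ℝ≥0∞) * μ (ball (x : X) ε)) := by
          gcongr
          exact hD (x : X) ε ⟨hεpos, by linarith⟩
      _ = ((D : ℝ≥0∞) * (D : ℝ≥0∞)) * μ (ball (x : X) ε) := by ring
      _ ≤ ((D ^ 2 : ℝ≥0) : ℝ≥0∞) * μ (closedBall (x : X) ε) := by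
          rw [ENNReal.coe_pow, pow_two]
          exact mul_le_mul_right (measure_mono ball_subset_closedBall) _
  -- local integrability on the subtype
  have hf' : LocallyIntegrable (fun y : U => f y) ν :=
    (locallyIntegrable_comap hU).2 (hf.locallyIntegrableOn U)
  have main := IsUnifLocDoublingMeasure.ae_tendsto_average_norm_sub (μ := ν) hf' 1
  have final : ∀ᵐ x ∂ν, Tendsto (fun r : ℝ => ⨍ y in ball (x : U).val r, f y ∂μ)
      (𝓝[>] 0) (𝓝 (f (x : U).val)) := by
    filter_upwards [main] with x hx
    have memev : ∀ᶠ r in 𝓝[>] (0:ℝ), x ∈ Metric.closedBall x (1 * r) := by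
      filter_upwards [self_mem_nhdsWithin] with r hr
      have : (0:ℝ) < r := hr
      exact Metric.mem_closedBall_self (by linarith)
    have h1 : Tendsto (fun r : ℝ => ⨍ y in Metric.closedBall x r,
        ‖f (y : U).val - f (x : U).val‖ ∂ν) (𝓝[>] 0) (𝓝 0) :=
      hx (fun _ => x) (fun r => r) tendsto_id memev
    have heq : ∀ r ∈ Ioc (0:ℝ) (R / 8),
        (⨍ y in Metric.closedBall x r, ‖f (y : U).val - f (x : U).val‖ ∂ν) =
        ⨍ y in closedBall (x : U).val r, ‖f y - f (x : U).val‖ ∂μ := by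
      intro r hr
      obtain ⟨hrpos, hrle⟩ := hr
      have hsubU : closedBall (x : U).val r ⊆ U :=
        (closedBall_subset_ball (by linarith)).trans (hUthick _ x.2)
      have hmeq : ν (Metric.closedBall x r) = μ (closedBall (x : U).val r) :=
        hν_cb x r hrpos (by linarith)
      have hieq : (∫ y in Metric.closedBall x r, ‖f (y : U).val - f (x : U).val‖ ∂ν) =
          ∫ y in closedBall (x : U).val r, ‖f y - f (x : U).val‖ ∂μ := by
        rw [hcb_pre]
        rw [← emb.setIntegral_map (g := fun y => ‖f y - f (x : U).val‖)]
        rw [map_comap_subtype_coe hU]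
        rw [Measure.restrict_restrict measurableSet_closedBall,
          Set.inter_eq_self_of_subset_left hsubU]
      rw [setAverage_eq, setAverage_eq, measureReal_def, measureReal_def, hmeq, hieq]
    have h2 : Tendsto (fun r : ℝ => ⨍ y in closedBall (x : U).val r,
        ‖f y - f (x : U).val‖ ∂μ) (𝓝[>] 0) (𝓝 0) := by
      apply h1.congr'
      filter_upwards [Ioc_mem_nhdsGT_of_mem (⟨le_refl (0 : ℝ), by linarith⟩ : (0:ℝ) ∈ Set.Ico 0 (R/8))]
        with r hr
      exact heq r hr
    exact tendsto_ball_average_of_closedBall hR hsupp hD (x : U).val (hf (x : U).val) h2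
  -- extract the null set
  set P : X → Prop := fun x => Tendsto (fun r : ℝ => ⨍ y in ball x r, f y ∂μ)
    (𝓝[>] 0) (𝓝 (f x)) with hP
  have hbad : ν {x : U | ¬ P (x : U).val} = 0 := by
    rw [← MeasureTheory.ae_iff]
    exact final
  refine ⟨Subtype.val '' (toMeasurable ν {x : U | ¬ P (x : U).val}), ?_, ?_, ?_, ?_⟩
  · exact hU.subtype_image (measurableSet_toMeasurable _ _)
  · rw [← comap_subtype_coe_apply hU, measure_toMeasurable]
    exact hbad
  · rintro y ⟨z, _, rfl⟩
    exact z.2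
  · rintro y ⟨hyU, hyN⟩
    by_contra hnot
    exact hyN ⟨⟨y, hyU⟩, subset_toMeasurable _ _ hnot, rfl⟩

end G

section Hull
variable {X : Type*} [MetricSpace X] [MeasurableSpace X] [BorelSpace X]
    [LocallyCompactSpace X] {μ : Measure X} [μ.InnerRegular] [IsFiniteMeasureOnCompacts μ]
    {R : ℝ} {D : ℝ≥0}

lemma sigmaCompactHull (hR : 0 < R)
    (hD : ∀ (x : X), ∀ r ∈ Set.Ioc (0 : ℝ) (3 * R),
      μ (ball x (2 * r)) ≤ (D : ℝ≥0∞) * μ (ball x r))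
    (U N : Set X) (hUsep : TopologicalSpace.IsSeparable U)
    (hU : MeasurableSet U) (hN : MeasurableSet N) (hNnull : μ N = 0) :
    ∃ K : ℕ × ℕ → Set X, (∀ p, IsCompact (K p)) ∧ (∀ p, K p ⊆ U \ N) ∧
      μ (U \ ⋃ p, K p) = 0 := by
  have hfin := meas_ball_lt_top hR hD (μ := μ)
  rcases Set.eq_empty_or_nonempty U with hUe | hUne
  · exact ⟨fun _ => ∅, fun _ => isCompact_empty, fun _ => empty_subset _,
      by simp [hUe]⟩
  obtain ⟨c, hc_count, hc⟩ := hUsep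
  have hcne : c.Nonempty := by
    by_contra hce
    rw [Set.not_nonempty_iff_eq_empty] at hce
    obtain ⟨u, hu⟩ := hUne
    have := hc hu
    simp [hce] at this
  obtain ⟨g, hg⟩ := Set.Countable.exists_eq_range hc_count hcne
  have hcover : U ⊆ ⋃ n, ball (g n) (R / 2) := by
    intro y hy
    obtain ⟨w, hwc, hwy⟩ := Metric.mem_closure_iff.1 (hc hy) (R / 2) (by linarith)
    rw [hg] at hwc
    obtain ⟨n, rfl⟩ := hwc
    exact mem_iUnion.2 ⟨n, by rwa [mem_ball]⟩
  set A : ℕ → Set X := fun n => (U ∩ ball (g n) (R / 2)) \ N with hA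
  have hAmeas : ∀ n, MeasurableSet (A n) := fun n =>
    ((hU.inter measurableSet_ball).diff hN)
  have hAfin : ∀ n, μ (A n) < ∞ := fun n =>
    lt_of_le_of_lt (measure_mono (fun y hy => hy.1.2)) (hfin (g n) (R / 2) (by linarith))
  have hex : ∀ p : ℕ × ℕ, ∃ K : Set X, K ⊆ A p.1 ∧ IsCompact K ∧
      μ (A p.1 \ K) < 1 / (p.2 + 1 : ℝ≥0∞) := by
    intro p
    exact (hAmeas p.1).exists_isCompact_diff_lt (hAfin p.1).ne (by simp)
  choose K hK1 hK2 hK3 using hex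
  refine ⟨K, hK2, ?_, ?_⟩
  · intro p y hy
    have := hK1 p hy
    exact ⟨this.1.1, this.2⟩
  · have hsub : U \ ⋃ p, K p ⊆ N ∪ ⋃ n, (A n \ ⋃ p, K p) := by
      intro y ⟨hyU, hyK⟩
      by_cases hyN : y ∈ N
      · exact Or.inl hyN
      · obtain ⟨n, hn⟩ := mem_iUnion.1 (hcover hyU)
        exact Or.inr (mem_iUnion.2 ⟨n, ⟨⟨hyU, hn⟩, hyN⟩, hyK⟩)
    refine measure_mono_null hsub ?_
    refine measure_union_null hNnull (measure_iUnion_null fun n => ?_)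
    have hbound : ∀ m : ℕ, μ (A n \ ⋃ p, K p) ≤ 1 / (m + 1 : ℝ≥0∞) := by
      intro m
      refine le_trans (measure_mono (diff_subset_diff_right ?_)) (hK3 (n, m)).le
      exact subset_iUnion K (n, m)
    have lim : Tendsto (fun m : ℕ => 1 / ((m : ℝ≥0∞) + 1)) atTop (𝓝 0) := by
      simp only [one_div]
      exact ENNReal.tendsto_inv_nat_nhds_zero.comp (tendsto_add_atTop_nat 1) |>.congr
        (by intro n; simp [Nat.cast_add])
    exact le_antisymm (ge_of_tendsto' lim fun m => hbound m) bot_le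

end Hull

/-- Lebesgue differentiation theorem in the locally doubling setting
(`D` a finite doubling constant for radii `≤ 3R`). -/
theorem stmt_8 {X : Type*} [MetricSpace X] [MeasurableSpace X] [BorelSpace X]
    [LocallyCompactSpace X] (μ : Measure X) [μ.InnerRegular] [IsFiniteMeasureOnCompacts μ]
    (hsupp : ∀ (x : X) (r : ℝ), 0 < r → 0 < μ (ball x r))
    (R : ℝ) (hR : 0 < R) (D : ℝ≥0) (hD1 : 1 ≤ D)
    (hD : ∀ (x : X), ∀ r ∈ Set.Ioc (0 : ℝ) (3 * R),
      μ (ball x (2 * r)) ≤ (D : ℝ≥0∞) * μ (ball x r))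
    {B : Type*} [NormedAddCommGroup B] [NormedSpace ℝ B] [CompleteSpace B]
    (f : X → B) (hf : LocallyIntegrable f μ) :
    ∀ᵐ x ∂μ, Tendsto (fun r : ℝ => ⨍ y in ball x r, f y ∂μ)
      (nhdsWithin 0 (Set.Ioi 0)) (nhds (f x)) := by
  set P : X → Prop := fun x => Tendsto (fun r : ℝ => ⨍ y in ball x r, f y ∂μ)
    (𝓝[>] 0) (𝓝 (f x)) with hPdef
  let s : Setoid X := ⟨chainRel R,
    ⟨chainRel_refl R, fun h => chainRel_symm h, fun h1 h2 => h1.trans h2⟩⟩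
  let U : Quotient s → Set X := fun q => chainClass R q.out
  have hmem : ∀ x : X, x ∈ U (Quotient.mk s x) := fun x =>
    (Quotient.mk_out x : chainRel R (Quotient.mk s x).out x)
  have hdisj : ∀ (q q' : Quotient s) (w : X), w ∈ U q → w ∈ U q' → q = q' := by
    intro q q' w hw hw'
    have : chainRel R q.out q'.out := Relation.ReflTransGen.trans hw (chainRel_symm hw')
    exact Quotient.out_equiv_out.1 this
  have hUopen : ∀ q, IsOpen (U q) := fun q => isOpen_chainClass R q.out hR
  have hUsep : ∀ q, TopologicalSpace.IsSeparable (U q) := fun q =>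
    isSeparable_chainClass hR hsupp hD q.out
  have hUthick : ∀ q, ∀ x ∈ U q, ball x (R / 2) ⊆ U q := fun q x hx =>
    ball_subset_chainClass hx
  choose N hN using fun q : Quotient s =>
    classGood hR hsupp hD hf (U q) (hUopen q) (hUsep q) (hUthick q)
  choose K hKcomp hKsub hKnull using fun q : Quotient s =>
    sigmaCompactHull hR hD (U q) (N q) (hUsep q) (hUopen q).measurableSet
      (hN q).1 (hN q).2.1
  set G : ℕ × ℕ → Set X := fun p => ⋃ q, K q p with hGdef
  have hGclosed : ∀ p, IsClosed (G p) := by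
    intro p
    apply isClosed_of_closure_subset
    intro z hz
    have hzK : z ∈ closure (K (Quotient.mk s z) p) := by
      rw [Metric.mem_closure_iff]
      intro ε hε
      obtain ⟨y, hyG, hyd⟩ := Metric.mem_closure_iff.1 hz (min ε (R / 2))
        (lt_min hε (by linarith))
      obtain ⟨q, hyq⟩ := mem_iUnion.1 hyG
      have hyU : y ∈ U q := ((hKsub q p) hyq).1
      have hzU : z ∈ U q := ball_subset_chainClass hyU
        (by rw [mem_ball]; exact lt_of_lt_of_le hyd (min_le_right _ _))
      have hq : q = Quotient.mk s z := hdisj q (Quotient.mk s z) z hzU (hmem z)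
      exact ⟨y, hq ▸ hyq, lt_of_lt_of_le hyd (min_le_left _ _)⟩
    rw [IsClosed.closure_eq (hKcomp (Quotient.mk s z) p).isClosed] at hzK
    exact mem_iUnion.2 ⟨Quotient.mk s z, hzK⟩
  set GOOD : Set X := ⋃ p, G p with hGOOD
  have hGOODmeas : MeasurableSet GOOD :=
    MeasurableSet.iUnion fun p => (hGclosed p).measurableSet
  have hbadsub : {x | ¬ P x} ⊆ GOODᶜ := by
    intro x hx hxG
    obtain ⟨p, hp⟩ := mem_iUnion.1 hxG
    obtain ⟨q, hq⟩ := mem_iUnion.1 hp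
    have hxU : x ∈ U q \ N q := hKsub q p hq
    exact hx ((hN q).2.2.2 x hxU)
  have hnull : μ GOODᶜ = 0 := by
    refine le_antisymm ?_ bot_le
    rw [hGOODmeas.compl.measure_eq_iSup_isCompact]
    refine iSup_le fun C => iSup_le fun hC => iSup_le fun hCc => ?_
    have hcover : C ⊆ ⋃ x : X, U (Quotient.mk s x) := fun y _ =>
      mem_iUnion.2 ⟨y, hmem y⟩
    obtain ⟨t, ht⟩ := hCc.elim_finite_subcover (fun x : X => U (Quotient.mk s x))
      (fun x => hUopen _) hcover
    have hsub : C ⊆ ⋃ x ∈ t, (U (Quotient.mk s x) \ ⋃ p, K (Quotient.mk s x) p) := by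
      intro y hy
      obtain ⟨x, hxt, hyx⟩ := mem_iUnion₂.1 (ht hy)
      refine mem_iUnion₂.2 ⟨x, hxt, hyx, ?_⟩
      intro hyK
      obtain ⟨p, hp⟩ := mem_iUnion.1 hyK
      exact (hC hy) (mem_iUnion.2 ⟨p, mem_iUnion.2 ⟨Quotient.mk s x, hp⟩⟩)
    have : μ (⋃ x ∈ t, (U (Quotient.mk s x) \ ⋃ p, K (Quotient.mk s x) p)) = 0 := by
      refine (measure_biUnion_null_iff t.countable_toSet).2 fun x _ => ?_
      exact hKnull (Quotient.mk s x)
    exact le_trans (measure_mono hsub) this.le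
  rw [MeasureTheory.ae_iff]
  exact measure_mono_null hbadsub hnull
end

section
/- For every p ∈ (1,∞), φ(∞,p) = (p')^{1/p}. Moreover, for √r ≤ p ≤ r one has φ(r,p) ≤ ((√r + 1)/(√r − 1))^{(1/p − 1/r)/(1 − 1/√r)}, and for 1 < p ≤ √r one has φ(r,p) ≤ ( p' + 1/(r/p − 1) )^{1/p}. -/
open Set ENNReal

/-- `φ(r,p)` for finite `r`. -/
noncomputable def phiF (r p : ℝ) : ℝ :=
  sInf ((fun q : ℝ =>
    (q / (q - 1) + 1 / (r / q - 1)) ^ ((1 / p - 1 / r) / (1 - q / r))) '' Set.Ioo 1 p)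

/-- `φ(∞,p)`. -/
noncomputable def phiTop (p : ℝ) : ℝ :=
  sInf ((fun q : ℝ => (q / (q - 1)) ^ (1 / p)) '' Set.Ioo 1 p)

open Filter Topology in
lemma my_sInf_le {f : ℝ → ℝ} {p t : ℝ} (ht : 1 < t) (htp : t ≤ p)
    (hb : BddBelow (f '' Set.Ioo 1 p))
    (hc : ContinuousWithinAt f (Set.Ioo 1 t) t) :
    sInf (f '' Set.Ioo 1 p) ≤ f t := by
  have hne : (𝓝[Set.Ioo 1 t] t).NeBot := by
    apply mem_closure_iff_nhdsWithin_neBot.mp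
    rw [closure_Ioo (ne_of_lt ht)]
    exact ⟨le_of_lt ht, le_refl t⟩
  refine ge_of_tendsto hc ?_
  filter_upwards [self_mem_nhdsWithin] with q hq
  exact csInf_le hb ⟨q, ⟨hq.1, lt_of_lt_of_le hq.2 htp⟩, rfl⟩

lemma bdd_phiF {r p : ℝ} (hp : 1 < p) (hpr : p ≤ r) :
    BddBelow ((fun q : ℝ =>
      (q / (q - 1) + 1 / (r / q - 1)) ^ ((1 / p - 1 / r) / (1 - q / r))) '' Set.Ioo 1 p) := by
  refine ⟨0, ?_⟩
  rintro x ⟨q, hq, rfl⟩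
  have hq1 : (1:ℝ) < q := hq.1
  have hq0 : (0:ℝ) < q := by linarith
  have hqr : q < r := lt_of_lt_of_le hq.2 hpr
  have h1 : 0 < q / (q - 1) := div_pos hq0 (by linarith)
  have h2 : 0 < r / q - 1 := by
    have : 1 < r / q := (one_lt_div hq0).mpr hqr
    linarith
  exact Real.rpow_nonneg (by positivity) _

/-- `φ(∞,p) = (p')^{1/p}`, and elementary upper bounds for `φ(r,p)`
in the ranges `√r ≤ p ≤ r` and `1 < p ≤ √r`. -/
theorem stmt_11 :
    (∀ p : ℝ, 1 < p → phiTop p = (p / (p - 1)) ^ (1 / p)) ∧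
    (∀ r p : ℝ, 1 < p → Real.sqrt r ≤ p → p ≤ r →
      phiF r p ≤ ((Real.sqrt r + 1) / (Real.sqrt r - 1)) ^
        ((1 / p - 1 / r) / (1 - 1 / Real.sqrt r))) ∧
    (∀ r p : ℝ, 1 < p → p ≤ Real.sqrt r →
      phiF r p ≤ (p / (p - 1) + 1 / (r / p - 1)) ^ (1 / p)) := by
  refine ⟨?_, ?_, ?_⟩
  · -- phiTop
    intro p hp
    have hp0 : (0:ℝ) < p := lt_trans one_pos hp
    have hp1 : (0:ℝ) < p - 1 := by linarith
    have hbdd : BddBelow ((fun q : ℝ => (q / (q - 1)) ^ (1 / p)) '' Set.Ioo 1 p) := by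
      refine ⟨0, ?_⟩
      rintro x ⟨q, hq, rfl⟩
      exact Real.rpow_nonneg (div_nonneg (by linarith [hq.1]) (by linarith [hq.1])) _
    apply le_antisymm
    · apply my_sInf_le hp le_rfl hbdd
      apply ContinuousAt.continuousWithinAt
      exact (continuousAt_id.div (continuousAt_id.sub continuousAt_const)
        (ne_of_gt hp1)).rpow continuousAt_const (Or.inl (ne_of_gt (div_pos hp0 hp1)))
    · apply le_csInf ((Set.nonempty_Ioo.mpr hp).image _)
      rintro x ⟨q, hq, rfl⟩
      have hq1 : (1:ℝ) < q := hq.1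
      apply Real.rpow_le_rpow (by positivity) _ (by positivity)
      rw [div_le_div_iff₀ hp1 (by linarith)]
      nlinarith [hq.2]
  · -- √r ≤ p ≤ r
    intro r p hp hsp hpr
    have hr1 : (1:ℝ) < r := lt_of_lt_of_le hp hpr
    have hr0 : (0:ℝ) < r := by linarith
    have hs1 : 1 < Real.sqrt r := (Real.lt_sqrt (by norm_num)).mpr (by nlinarith)
    have hs0 : (0:ℝ) < Real.sqrt r := by linarith
    have hss : Real.sqrt r * Real.sqrt r = r := Real.mul_self_sqrt (le_of_lt hr0)
    have hrs : r / Real.sqrt r = Real.sqrt r := Real.div_sqrt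
    have hsr : Real.sqrt r / r = 1 / Real.sqrt r := by
      rw [← hss]; field_simp; rw [Real.sqrt_sq hs0.le]
    have hs1' : Real.sqrt r - 1 ≠ 0 := ne_of_gt (by linarith)
    have hbase : 0 < Real.sqrt r / (Real.sqrt r - 1) + 1 / (r / Real.sqrt r - 1) := by
      rw [hrs]
      have := div_pos hs0 (show (0:ℝ) < Real.sqrt r - 1 by linarith)
      have := div_pos one_pos (show (0:ℝ) < Real.sqrt r - 1 by linarith)
      linarith
    have hexp : 1 - Real.sqrt r / r ≠ 0 := by
      rw [hsr]
      have : 1 / Real.sqrt r < 1 := (div_lt_one hs0).mpr hs1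
      linarith
    have hcont : ContinuousAt (fun q : ℝ =>
        (q / (q - 1) + 1 / (r / q - 1)) ^ ((1 / p - 1 / r) / (1 - q / r))) (Real.sqrt r) := by
      refine ContinuousAt.rpow ?_ ?_ (Or.inl (ne_of_gt hbase))
      · exact (continuousAt_id.div (continuousAt_id.sub continuousAt_const) hs1').add
          (continuousAt_const.div
            ((continuousAt_const.div continuousAt_id (ne_of_gt hs0)).sub continuousAt_const)
            (by show r / Real.sqrt r - 1 ≠ 0; rw [hrs]; exact hs1'))
      · exact continuousAt_const.div
          (continuousAt_const.sub (continuousAt_id.div continuousAt_const (ne_of_gt hr0))) hexp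
    have key := my_sInf_le hs1 hsp (bdd_phiF hp hpr) hcont.continuousWithinAt
    rw [phiF]
    refine le_trans key (le_of_eq ?_)
    show (Real.sqrt r / (Real.sqrt r - 1) + 1 / (r / Real.sqrt r - 1)) ^
        ((1 / p - 1 / r) / (1 - Real.sqrt r / r)) = _
    rw [hrs, hsr]
    congr 1
    field_simp
  · -- 1 < p ≤ √r
    intro r p hp hps
    have hs1 : 1 < Real.sqrt r := lt_of_lt_of_le hp hps
    have hr1 : (1:ℝ) < r := by
      by_contra h
      push_neg at h
      have := Real.sqrt_le_one.mpr h
      linarith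
    have hr0 : (0:ℝ) < r := by linarith
    have hss : Real.sqrt r * Real.sqrt r = r := Real.mul_self_sqrt (by linarith)
    have hs0 : (0:ℝ) < Real.sqrt r := by linarith
    have hpr : p < r := by nlinarith
    have hp0 : (0:ℝ) < p := lt_trans one_pos hp
    have hp1 : (0:ℝ) < p - 1 := by linarith
    have hrp1 : 0 < r / p - 1 := by
      have : 1 < r / p := (one_lt_div hp0).mpr hpr
      linarith
    have hbase : 0 < p / (p - 1) + 1 / (r / p - 1) := by
      have := div_pos hp0 hp1
      have := div_pos one_pos hrp1
      linarith
    have hexp0 : 0 < 1 - p / r := by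
      have : p / r < 1 := (div_lt_one hr0).mpr hpr
      linarith
    have hcont : ContinuousAt (fun q : ℝ =>
        (q / (q - 1) + 1 / (r / q - 1)) ^ ((1 / p - 1 / r) / (1 - q / r))) p := by
      refine ContinuousAt.rpow ?_ ?_ (Or.inl (ne_of_gt hbase))
      · exact (continuousAt_id.div (continuousAt_id.sub continuousAt_const) (ne_of_gt hp1)).add
          (continuousAt_const.div
            ((continuousAt_const.div continuousAt_id (ne_of_gt hp0)).sub continuousAt_const)
            (ne_of_gt hrp1))
      · exact continuousAt_const.div
          (continuousAt_const.sub (continuousAt_id.div continuousAt_const (ne_of_gt hr0)))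
          (ne_of_gt hexp0)
    have key := my_sInf_le hp le_rfl (bdd_phiF hp (le_of_lt hpr)) hcont.continuousWithinAt
    rw [phiF]
    refine le_trans key (le_of_eq ?_)
    show (p / (p - 1) + 1 / (r / p - 1)) ^ ((1 / p - 1 / r) / (1 - p / r)) = _
    congr 1
    rw [div_eq_iff (ne_of_gt hexp0)]
    field_simp
end

section
/- For every C_1, C_2 > 1 there exists C_3 > 0 such that φ(r,p) ≤ C_3 for every r, p ∈ [C_1, ∞] satisfying p ≤ min( C_2 r, r/(1 − C_2/log r)_+ ) (where for r = ∞ this condition is interpreted as p ≤ ∞). -/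
open Set ENNReal

/-- `φ(r,p)` for `r ∈ (1,∞]`, `p ≤ r`. -/
noncomputable def phiE (r : ℝ≥0∞) (p : ℝ) : ℝ :=
  if r = ∞ then phiTop p else phiF r.toReal p

/-- The full `φ`: `φ(r,p)` for `p ≤ r`, and `φ(r,p) := φ(r',p')` for `p ≥ r`. -/
noncomputable def phiFull (r p : ℝ≥0∞) : ℝ :=
  if p ≤ r then phiE r p.toReal
  else phiE (ENNReal.ofReal (r.toReal / (r.toReal - 1))) (p.toReal / (p.toReal - 1))

lemma sInf_le_of_mem_nonneg {s : Set ℝ} {a : ℝ} (ha : a ∈ s) (h0 : 0 ≤ a) : sInf s ≤ a := by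
  by_cases hb : BddBelow s
  · exact csInf_le hb ha
  · rw [Real.sInf_of_not_bddBelow hb]; exact h0

lemma phiF_le {ρ π D : ℝ} (hπ : 1 < π) (hπρ : π ≤ ρ)
    (hD : (1/π - 1/ρ) * (2*π/(π-1)) * Real.log (2*(π+1)/(π-1)) ≤ D) :
    phiF ρ π ≤ Real.exp D := by
  set q : ℝ := (1+π)/2 with hqdef
  have hπ0 : (0:ℝ) < π := by linarith
  have hρ0 : (0:ℝ) < ρ := by linarith
  have hq1 : 1 < q := by rw [hqdef]; linarith
  have hqπ : q < π := by rw [hqdef]; linarith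
  have hq0 : (0:ℝ) < q := by linarith
  have hmem : q ∈ Ioo (1:ℝ) π := ⟨hq1, hqπ⟩
  have hq10 : (0:ℝ) < q - 1 := by linarith
  have hρq : 1 < ρ / q := (one_lt_div hq0).mpr (by linarith)
  set b : ℝ := q / (q - 1) + 1 / (ρ / q - 1) with hbdef
  have hb1 : 1 < b := by
    have h1 : 1 < q / (q-1) := (one_lt_div hq10).mpr (by linarith)
    have h2 : 0 < 1 / (ρ/q - 1) := one_div_pos.mpr (by linarith)
    rw [hbdef]; linarith
  have hb0 : (0:ℝ) < b := by linarith
  set e : ℝ := (1/π - 1/ρ) / (1 - q/ρ) with hedef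
  have hnum : 0 ≤ 1/π - 1/ρ := by
    have := one_div_le_one_div_of_le hπ0 hπρ
    linarith
  have hden : (π-1)/(2*π) ≤ 1 - q/ρ := by
    have h1 : q/ρ ≤ q/π := by gcongr
    have h2 : q/π = (1+π)/(2*π) := by rw [hqdef]; ring
    have h3 : 1 - (1+π)/(2*π) = (π-1)/(2*π) := by field_simp; ring
    rw [h2] at h1; linarith
  have hden0 : (0:ℝ) < (π-1)/(2*π) := div_pos (by linarith) (by linarith)
  have he0 : 0 ≤ e := by
    rw [hedef]; exact div_nonneg hnum (by linarith)
  have heM : e ≤ (1/π - 1/ρ) * (2*π/(π-1)) := by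
    rw [hedef]
    calc (1/π - 1/ρ) / (1 - q/ρ) ≤ (1/π - 1/ρ) / ((π-1)/(2*π)) :=
          div_le_div_of_nonneg_left hnum hden0 hden
      _ = (1/π - 1/ρ) * (2*π/(π-1)) := by
          rw [div_div_eq_mul_div]; ring
  have hB1 : (1:ℝ) < 2*(π+1)/(π-1) := by
    rw [lt_div_iff₀ (by linarith)]; linarith
  have hbB : b ≤ 2*(π+1)/(π-1) := by
    have h1 : q/(q-1) = (π+1)/(π-1) := by
      rw [div_eq_div_iff (by linarith) (by linarith), hqdef]; ring
    have hπq1 : π/q - 1 = (π-1)/(1+π) := by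
      rw [hqdef]; field_simp; ring
    have h3 : π/q - 1 ≤ ρ/q - 1 := by gcongr
    have h4 : 1/(ρ/q-1) ≤ 1/(π/q-1) := by
      apply one_div_le_one_div_of_le _ h3
      rw [hπq1]; exact div_pos (by linarith) (by linarith)
    have h5 : (1:ℝ)/(π/q-1) = (π+1)/(π-1) := by
      rw [hπq1, one_div_div]; ring_nf
    have h6 : 2*(π+1)/(π-1) = (π+1)/(π-1) + (π+1)/(π-1) := by ring
    rw [hbdef, h1, h6]
    linarith [h5 ▸ h4]
  have hmem2 : b ^ e ∈ ((fun q : ℝ =>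
      (q / (q - 1) + 1 / (ρ / q - 1)) ^ ((1 / π - 1 / ρ) / (1 - q / ρ))) '' Set.Ioo 1 π) :=
    ⟨q, hmem, rfl⟩
  have h6 : phiF ρ π ≤ b ^ e := sInf_le_of_mem_nonneg hmem2 (Real.rpow_nonneg hb0.le e)
  rw [Real.rpow_def_of_pos hb0] at h6
  refine h6.trans (Real.exp_le_exp.mpr ?_)
  calc Real.log b * e ≤ Real.log (2*(π+1)/(π-1)) * ((1/π - 1/ρ) * (2*π/(π-1))) := by
        apply mul_le_mul _ heM he0 (Real.log_nonneg hB1.le)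
        exact Real.log_le_log hb0 hbB
    _ = (1/π - 1/ρ) * (2*π/(π-1)) * Real.log (2*(π+1)/(π-1)) := by ring
    _ ≤ D := hD

lemma phiTop_le {π D : ℝ} (hπ : 1 < π)
    (hD : (1/π) * Real.log ((π+1)/(π-1)) ≤ D) : phiTop π ≤ Real.exp D := by
  set q : ℝ := (1+π)/2 with hqdef
  have hq1 : 1 < q := by rw [hqdef]; linarith
  have hqπ : q < π := by rw [hqdef]; linarith
  have hq10 : (0:ℝ) < q - 1 := by linarith
  have hb0 : (0:ℝ) < q/(q-1) := by positivity
  have h1 : q/(q-1) = (π+1)/(π-1) := by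
    rw [div_eq_div_iff (by linarith) (by linarith), hqdef]; ring
  have hmem2 : (q/(q-1)) ^ (1/π) ∈ ((fun q : ℝ => (q / (q - 1)) ^ (1 / π)) '' Set.Ioo 1 π) :=
    ⟨q, ⟨hq1, hqπ⟩, rfl⟩
  have h6 : phiTop π ≤ (q/(q-1)) ^ (1/π) := sInf_le_of_mem_nonneg hmem2 (Real.rpow_nonneg hb0.le _)
  rw [Real.rpow_def_of_pos hb0, h1] at h6
  refine h6.trans (Real.exp_le_exp.mpr ?_)
  rw [mul_comm]; exact hD

set_option maxHeartbeats 1000000 in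
/-- uniform boundedness of `φ(r,p)` for `r, p ∈ [C₁,∞]` with
`p ≤ min(C₂ r, r/(1 − C₂/log r)₊)` (the latter condition being `p ≤ ∞` when `r = ∞`,
and `r/0₊ = ∞`, both built into the `ℝ≥0∞` arithmetic below). -/
theorem stmt_12 (C₁ C₂ : ℝ) (hC₁ : 1 < C₁) (hC₂ : 1 < C₂) :
    ∃ C₃ : ℝ, 0 < C₃ ∧ ∀ r p : ℝ≥0∞,
      ENNReal.ofReal C₁ ≤ r → ENNReal.ofReal C₁ ≤ p →
      p ≤ ENNReal.ofReal C₂ * r →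
      p ≤ r / ENNReal.ofReal (1 - C₂ / Real.log r.toReal) →
      phiFull r p ≤ C₃ := by
  set Dt : ℝ := max (max ((2/(C₁-1)) * Real.log (2*(C₁+1)/(C₁-1))) (Real.log ((C₁+1)/(C₁-1))))
    (max ((2*C₂-2) * (Real.log (4*C₂) + 2*C₂)) (2*Real.log 8 + 4*C₂)) with hDt
  refine ⟨Real.exp Dt, Real.exp_pos _, ?_⟩
  intro r p hr hp h1 h2
  rw [phiFull]
  by_cases hpr : p ≤ r
  · rw [if_pos hpr, phiE]
    by_cases hrtop : r = ∞
    · rw [if_pos hrtop]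
      by_cases hptop : p = ∞
      · rw [hptop, ENNReal.toReal_top, phiTop,
          show Ioo (1:ℝ) 0 = ∅ from Ioo_eq_empty (by norm_num), Set.image_empty,
          Real.sInf_empty]
        positivity
      · have hP : C₁ ≤ p.toReal := (ENNReal.ofReal_le_iff_le_toReal hptop).mp hp
        apply phiTop_le (by linarith)
        have hP1 : 1 < p.toReal := by linarith
        calc (1/p.toReal) * Real.log ((p.toReal+1)/(p.toReal-1))
            ≤ 1 * Real.log ((C₁+1)/(C₁-1)) := by
              apply mul_le_mul
              · rw [div_le_one (by linarith)]; linarith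
              · apply Real.log_le_log (div_pos (by linarith) (by linarith))
                rw [div_le_div_iff₀ (by linarith) (by linarith)]; nlinarith
              · apply Real.log_nonneg
                rw [le_div_iff₀ (by linarith)]; linarith
              · norm_num
          _ = Real.log ((C₁+1)/(C₁-1)) := one_mul _
          _ ≤ Dt := le_trans (le_max_right _ _) (le_max_left _ _)
    · rw [if_neg hrtop]
      have hptop : p ≠ ∞ := by
        intro h; exact hrtop (top_le_iff.mp (h ▸ hpr))
      have hP : C₁ ≤ p.toReal := (ENNReal.ofReal_le_iff_le_toReal hptop).mp hp
      have hPR : p.toReal ≤ r.toReal := ENNReal.toReal_mono hrtop hpr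
      set P := p.toReal; set R := r.toReal
      have hP1 : 1 < P := by linarith
      have hP0 : (0:ℝ) < P := by linarith
      have hP10 : (0:ℝ) < P - 1 := by linarith
      have hR0 : (0:ℝ) < R := by linarith
      apply phiF_le hP1 hPR
      have e2 : (1/P - 1/R) * (2*P/(P-1)) ≤ (1/P) * (2*P/(P-1)) := by
        apply mul_le_mul_of_nonneg_right _ (div_nonneg (by linarith) (by linarith))
        have : 0 < 1/R := by positivity
        linarith
      have e3 : (1/P)*(2*P/(P-1)) = 2/(P-1) := by
        field_simp
      have e4 : 2/(P-1) ≤ 2/(C₁-1) :=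
        div_le_div_of_nonneg_left (by norm_num) (by linarith) (by linarith)
      have e5 : Real.log (2*(P+1)/(P-1)) ≤ Real.log (2*(C₁+1)/(C₁-1)) := by
        apply Real.log_le_log (div_pos (by linarith) (by linarith))
        rw [div_le_div_iff₀ (by linarith) (by linarith)]; nlinarith
      have e6 : 0 ≤ Real.log (2*(P+1)/(P-1)) := by
        apply Real.log_nonneg; rw [le_div_iff₀ (by linarith)]; linarith
      calc (1/P - 1/R) * (2*P/(P-1)) * Real.log (2*(P+1)/(P-1))
          ≤ (2/(C₁-1)) * Real.log (2*(C₁+1)/(C₁-1)) := by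
            apply mul_le_mul _ e5 e6 (div_nonneg (by norm_num) (by linarith))
            rw [← e3] at e4; linarith
        _ ≤ Dt := le_trans (le_max_left _ _) (le_max_left _ _)
  · rw [if_neg hpr, phiE, if_neg ENNReal.ofReal_ne_top]
    push_neg at hpr
    have hrtop : r ≠ ∞ := hpr.ne_top
    have hptop : p ≠ ∞ :=
      ne_top_of_le_ne_top (ENNReal.mul_ne_top ENNReal.ofReal_ne_top hrtop) h1
    have hR : C₁ ≤ r.toReal := (ENNReal.ofReal_le_iff_le_toReal hrtop).mp hr
    have hP : C₁ ≤ p.toReal := (ENNReal.ofReal_le_iff_le_toReal hptop).mp hp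
    have hRP : r.toReal < p.toReal := ENNReal.toReal_strict_mono hptop hpr
    set R := r.toReal with hRdef
    set P := p.toReal with hPdef
    have hR1 : 1 < R := by linarith
    have hP1 : 1 < P := by linarith
    have hP0 : P ≠ 0 := by positivity
    have hP10 : P - 1 ≠ 0 := by intro h; rw [sub_eq_zero] at h; linarith
    have hR0 : R ≠ 0 := by positivity
    have hR10 : R - 1 ≠ 0 := by intro h; rw [sub_eq_zero] at h; linarith
    have hPC : P ≤ C₂ * R := by
      have := ENNReal.toReal_mono (ENNReal.mul_ne_top ENNReal.ofReal_ne_top hrtop) h1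
      rwa [ENNReal.toReal_mul, ENNReal.toReal_ofReal (by linarith)] at this
    rw [ENNReal.toReal_ofReal (div_nonneg (by linarith) (by linarith))]
    have hπ1 : 1 < P/(P-1) := (one_lt_div (by linarith)).mpr (by linarith)
    apply phiF_le hπ1
    · rw [div_le_div_iff₀ (by linarith) (by linarith)]; nlinarith
    -- key simplification
    have hπm1 : P/(P-1) - 1 = 1/(P-1) := by field_simp; ring
    have hd0 : P/(P-1) - 1 ≠ 0 := by
      rw [hπm1]; exact (one_div_pos.mpr (by linarith)).ne'
    have s3 : 2*(P/(P-1))/(P/(P-1)-1) = 2*P := by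
      rw [div_eq_iff hd0, hπm1]; field_simp
    have eq1 : (1/(P/(P-1)) - 1/(R/(R-1))) * (2*(P/(P-1))/(P/(P-1)-1)) = 2*P/R - 2 := by
      rw [s3, one_div_div, one_div_div]
      field_simp
      ring
    have eq2 : 2*(P/(P-1)+1)/(P/(P-1)-1) = 4*P - 2 := by
      rw [div_eq_iff hd0, hπm1]; field_simp; ring
    rw [eq1, eq2]
    -- now prove (2*P/R - 2) * Real.log (4*P-2) ≤ Dt
    have hnn1 : 0 ≤ 2*P/R - 2 := by
      have : (2:ℝ) ≤ 2*P/R := by rw [le_div_iff₀ (by linarith)]; nlinarith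
      linarith
    have hnn2 : 0 ≤ Real.log (4*P-2) := Real.log_nonneg (by linarith)
    set L := Real.log R with hLdef
    by_cases hL : L ≤ 2*C₂
    · have hM : 2*P/R - 2 ≤ 2*C₂ - 2 := by
        have h' : P/R ≤ C₂ := (div_le_iff₀ (by linarith)).mpr (by linarith)
        have h'' : 2*P/R = 2*(P/R) := by ring
        rw [h'']; linarith
      have hlogarg : Real.log (4*P-2) ≤ Real.log (4*C₂) + 2*C₂ := by
        have h4 : 4*P - 2 ≤ 4*C₂*R := by nlinarith
        calc Real.log (4*P-2) ≤ Real.log (4*C₂*R) := Real.log_le_log (by linarith) h4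
          _ = Real.log (4*C₂) + L := Real.log_mul (by positivity) (by linarith)
          _ ≤ Real.log (4*C₂) + 2*C₂ := by linarith
      have hnn3 : 0 ≤ Real.log (4*C₂) + 2*C₂ := by
        have : 0 ≤ Real.log (4*C₂) := Real.log_nonneg (by linarith)
        linarith
      calc (2*P/R - 2) * Real.log (4*P-2) ≤ (2*C₂-2) * (Real.log (4*C₂) + 2*C₂) :=
            mul_le_mul hM hlogarg hnn2 (by linarith)
        _ ≤ Dt := le_trans (le_max_left _ _) (le_max_right _ _)
    · push_neg at hL
      have hL0 : 0 < L := by linarith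
      have ht0 : 0 < 1 - C₂/L := by
        have : C₂/L < 1/2 := (div_lt_iff₀ hL0).mpr (by linarith)
        linarith
      have hmul : p * ENNReal.ofReal (1 - C₂/L) ≤ r := by
        calc p * ENNReal.ofReal (1 - C₂/L)
            ≤ (r / ENNReal.ofReal (1 - C₂/L)) * ENNReal.ofReal (1 - C₂/L) :=
              mul_le_mul_left h2 _
          _ = r := ENNReal.div_mul_cancel (ENNReal.ofReal_pos.mpr ht0).ne'
              ENNReal.ofReal_ne_top
      have hPt : P * (1 - C₂/L) ≤ R := by
        have := ENNReal.toReal_mono hrtop hmul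
        rwa [ENNReal.toReal_mul, ENNReal.toReal_ofReal ht0.le] at this
      have hC₂L : C₂/L < 1/2 := (div_lt_iff₀ hL0).mpr (by linarith)
      have hPR2 : P ≤ 2*R := by nlinarith
      have hM : 2*P/R - 2 ≤ 4*C₂/L := by
        have h1' : P - R ≤ P*(C₂/L) := by nlinarith
        have h2' : P*(C₂/L) ≤ 2*R*(C₂/L) :=
          mul_le_mul_of_nonneg_right hPR2 (by positivity)
        have h3' : 2*P/R - 2 = 2*(P-R)/R := by field_simp
        rw [h3', div_le_div_iff₀ (by linarith) hL0]
        have h4' : (P-R)*L ≤ 2*R*(C₂/L)*L := by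
          apply mul_le_mul_of_nonneg_right (h1'.trans h2') hL0.le
        have h5' : 2*R*(C₂/L)*L = 2*R*C₂ := by field_simp
        nlinarith [h4', h5']
      have hlog2 : Real.log (4*P-2) ≤ Real.log 8 + L := by
        have h4 : 4*P-2 ≤ 8*R := by linarith
        calc Real.log (4*P-2) ≤ Real.log (8*R) := Real.log_le_log (by linarith) h4
          _ = Real.log 8 + L := Real.log_mul (by norm_num) (by linarith)
      have hlog8 : 0 ≤ Real.log 8 := Real.log_nonneg (by norm_num)
      calc (2*P/R - 2) * Real.log (4*P-2)
          ≤ (4*C₂/L) * (Real.log 8 + L) :=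
            mul_le_mul hM hlog2 hnn2 (by positivity)
        _ = 4*C₂*Real.log 8/L + 4*C₂ := by field_simp
        _ ≤ 2*Real.log 8 + 4*C₂ := by
            have : 4*C₂*Real.log 8/L ≤ 2*Real.log 8 := by
              rw [div_le_iff₀ hL0]; nlinarith
            linarith
        _ ≤ Dt := le_trans (le_max_right _ _) (le_max_right _ _)
end
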